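/- arXiv:2206.03005 — 3 statements merged into one kernel-verified Lean document; each statement's English description precedes it below -/
import Mathlib

section
/- Let (X,d) and (Y,d′) be metric spaces and equip X × Y with the metric (d×d′)((x₁,y₁),(x₂,y₂)) = max(d(x₁,x₂), d′(y₁,y₂)). Then for any ε > 0, widim_ε(X × Y, d×d′) ≤ widim_ε(X,d) + widim_ε(Y,d′). -/
open scoped ENNReal

/-- An abstract finite simplicial complex on a vertex type `V`: a finite, downward closed
family of nonempty finite sets of vertices. -/
structure FinSimpComplex (V : Type) where
  faces : Finset (Finset V)
  nonempty_of_mem : ∀ s ∈ faces, s.Nonempty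
  down_closed : ∀ s ∈ faces, ∀ t ⊆ s, t.Nonempty → t ∈ faces

namespace FinSimpComplex

/-- The geometric realization of `K`: the set of barycentric coordinate functions supported
on a face of `K`. -/
def space {V : Type} [Fintype V] (K : FinSimpComplex V) : Set (V → ℝ) :=
  {x | (∀ v, 0 ≤ x v) ∧ (∑ v, x v = 1) ∧ ∃ s ∈ K.faces, ∀ v, x v ≠ 0 → v ∈ s}

/-- `K` has dimension at most `n`. -/
def dimLE {V : Type} (K : FinSimpComplex V) (n : ℕ) : Prop :=
  ∀ s ∈ K.faces, s.card ≤ n + 1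

/-- The dimension of `K` (with value `0` for the empty complex). -/
def dim {V : Type} (K : FinSimpComplex V) : ℕ :=
  K.faces.sup fun s => s.card - 1

/-- The vertex set of `K`. -/
def vertexSet {V : Type} [Fintype V] [DecidableEq V] (K : FinSimpComplex V) : Finset V :=
  Finset.univ.filter fun v => {v} ∈ K.faces

/-- The open star of the vertex `v` in the realization of `K`: the union of the interiors of
the simplices containing `v`, i.e. the points whose `v`-th barycentric coordinate is nonzero. -/
def star {V : Type} [Fintype V] (K : FinSimpComplex V) (v : V) : Set ↥K.space :=
  {x | (x : V → ℝ) v ≠ 0}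

/-- The full subcomplex of `K` spanned by the vertex set `A`. -/
def fullSub {V : Type} [DecidableEq V] (K : FinSimpComplex V) (A : Finset V) :
    FinSimpComplex V where
  faces := K.faces.filter fun s => s ⊆ A
  nonempty_of_mem s hs := K.nonempty_of_mem s (Finset.mem_filter.1 hs).1
  down_closed s hs t hts htne := Finset.mem_filter.2
    ⟨K.down_closed s (Finset.mem_filter.1 hs).1 t hts htne,
     hts.trans (Finset.mem_filter.1 hs).2⟩

end FinSimpComplex

/-- The diameter of a set with respect to a distance function `d`, valued in `ℝ≥0∞`. -/
noncomputable def diamOn {X : Type*} (d : X → X → ℝ) (S : Set X) : ℝ≥0∞ :=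
  ⨆ x ∈ S, ⨆ y ∈ S, ENNReal.ofReal (d x y)

/-- `f` is an `ε`-embedding w.r.t. `d`: it is continuous and all its fibers have
`d`-diameter `< ε`. -/
def IsEpsEmbedding {X P : Type*} [TopologicalSpace X] [TopologicalSpace P]
    (d : X → X → ℝ) (ε : ℝ) (f : X → P) : Prop :=
  Continuous f ∧ ∀ p : P, diamOn d (f ⁻¹' {p}) < ENNReal.ofReal ε

/-- The `ε`-width dimension of `X` w.r.t. `d`: the minimal integer `n ≥ 0` such that there is
an `ε`-embedding of `X` into some at most `n`-dimensional finite simplicial complex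
(`⊤` if no such embedding exists). -/
noncomputable def widim (X : Type*) [TopologicalSpace X] (d : X → X → ℝ) (ε : ℝ) : ℝ≥0∞ :=
  sInf {r : ℝ≥0∞ | ∃ n : ℕ, (n : ℝ≥0∞) = r ∧
    ∃ (k : ℕ) (K : FinSimpComplex (Fin k)) (f : X → ↥K.space),
      K.dimLE n ∧ IsEpsEmbedding d ε f}

/-- The dynamical distance `d_N(x,y) = max_{0 ≤ n < N} d(Tⁿx, Tⁿy)`. -/
noncomputable def dynDist {X : Type*} (d : X → X → ℝ) (T : X → X) (N : ℕ) (x y : X) : ℝ :=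
  (Finset.range N).fold max 0 fun n => d (T^[n] x) (T^[n] y)

/-- The mean dimension `mdim(X,T) = lim_{ε→0} lim_{N→∞} widim_ε(X,d_N)/N`; the limit in `N`
exists and equals the infimum by subadditivity, and the limit in `ε` is the supremum
by monotonicity. -/
noncomputable def mdim (X : Type*) [TopologicalSpace X] (d : X → X → ℝ) (T : X → X) : ℝ≥0∞ :=
  ⨆ (ε : ℝ) (_ : 0 < ε), ⨅ (N : ℕ) (_ : 0 < N), widim X (dynDist d T N) ε / (N : ℝ≥0∞)

/-- The relative mean dimension of a factor map `π`:
`mdim(π,T) = lim_{ε→0} lim_{N→∞} (sup_y widim_ε(π⁻¹(y), d_N))/N`. -/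
noncomputable def mdimRel {X Y : Type*} [TopologicalSpace X] (d : X → X → ℝ)
    (T : X → X) (π : X → Y) : ℝ≥0∞ :=
  ⨆ (ε : ℝ) (_ : 0 < ε), ⨅ (N : ℕ) (_ : 0 < N),
    (⨆ y : Y, widim ↥(π ⁻¹' {y}) (fun a b => dynDist d T N a.1 b.1) ε) / (N : ℝ≥0∞)

/-- The upper mean dimension of a subset `A ⊆ X`:
`lim_{ε→0} limsup_{N→∞} widim_ε(A,d_N)/N`. -/
noncomputable def umdim {X : Type*} [TopologicalSpace X] (d : X → X → ℝ) (T : X → X)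
    (A : Set X) : ℝ≥0∞ :=
  ⨆ (ε : ℝ) (_ : 0 < ε),
    Filter.limsup (fun N : ℕ =>
      widim ↥A (fun a b => dynDist d T N a.1 b.1) ε / (N : ℝ≥0∞)) Filter.atTop

/-- The lower mean dimension of a subset `A ⊆ X`:
`lim_{ε→0} liminf_{N→∞} widim_ε(A,d_N)/N`. -/
noncomputable def lmdim {X : Type*} [TopologicalSpace X] (d : X → X → ℝ) (T : X → X)
    (A : Set X) : ℝ≥0∞ :=
  ⨆ (ε : ℝ) (_ : 0 < ε),
    Filter.liminf (fun N : ℕ =>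
      widim ↥A (fun a b => dynDist d T N a.1 b.1) ε / (N : ℝ≥0∞)) Filter.atTop

/-- A factor map between dynamical systems: a continuous equivariant surjection. -/
structure IsFactorMap {X Y : Type*} [TopologicalSpace X] [TopologicalSpace Y]
    (T : X → X) (S : Y → Y) (π : X → Y) : Prop where
  continuous : Continuous π
  surjective : Function.Surjective π
  equivariant : ∀ x, π (T x) = S (π x)

/-- The orbit capacity `ocap(A) = lim_{N→∞} (1/N) sup_x Σ_{n<N} 1_A(Tⁿx)`; the limit exists
and equals the infimum by subadditivity. -/
noncomputable def ocap {X : Type*} (T : X → X) (A : Set X) : ℝ≥0∞ :=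
  ⨅ (N : ℕ) (_ : 0 < N),
    (⨆ x : X, ∑ n ∈ Finset.range N, A.indicator (fun _ => (1 : ℝ≥0∞)) (T^[n] x)) / (N : ℝ≥0∞)

/-- The small boundary property. -/
def SmallBoundaryProperty {Y : Type*} [TopologicalSpace Y] (S : Y → Y) : Prop :=
  ∀ y : Y, ∀ U : Set Y, IsOpen U → y ∈ U →
    ∃ V : Set Y, IsOpen V ∧ y ∈ V ∧ V ⊆ U ∧ ocap S (frontier V) = 0

/-- `d` is a metric on `X` compatible with the given topology. -/
def IsCompatibleMetric {X : Type*} [t : TopologicalSpace X] (d : X → X → ℝ) : Prop :=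
  ∃ m : MetricSpace X,
    m.toPseudoMetricSpace.toUniformSpace.toTopologicalSpace = t ∧
    ∀ x y, @dist X m.toPseudoMetricSpace.toDist x y = d x y

/-!
Fix ε-embeddings `f : X → |K|` and `g : Y → |L|` with `dim K ≤ n`, `dim L ≤ m`, and order the
vertices of `K` and `L`. The staircase triangulation of `|K| × |L|` has as simplices the chains of
`V × W` projecting to simplices of `K` and `L`; a chain steps up in some coordinate at each step,
so this complex has dimension `≤ n + m`. A pair of points `x ∈ |K|`, `y ∈ |L|` (probability
vectors) is sent to its monotone coupling: `(v, w)` gets the length of the overlap of the `v`-th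
interval of the partition of `[0, 1]` cut out by the partial sums of `x` with the `w`-th one of
`y`. Its support is a chain and its marginals are `x` and `y`, so this is a continuous injection
of `|K| × |L|` into the staircase triangulation; composed with `f × g`, whose fibers are products
of fibers, it is an ε-embedding for the max metric.
-/

open Finset

/-- The length of `[F i, F (i+1)] ∩ [G j, G (j+1)]` for monotone `F`, `G` (see `overlap_eq_max`),
written by inclusion-exclusion so that sums over `j` telescope. -/
def overlap (F G : ℕ → ℝ) (i j : ℕ) : ℝ :=
  min (F (i + 1)) (G (j + 1)) - min (F i) (G (j + 1)) -
    (min (F (i + 1)) (G j) - min (F i) (G j))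

section Overlap

variable {F G : ℕ → ℝ} {i j l : ℕ}

lemma overlap_comm (F G : ℕ → ℝ) (i j : ℕ) : overlap F G i j = overlap G F j i := by
  simp only [overlap, min_comm]
  ring

lemma overlap_eq_max (hF : F i ≤ F (i + 1)) (hG : G j ≤ G (j + 1)) :
    overlap F G i j = max 0 (min (F (i + 1)) (G (j + 1)) - max (F i) (G j)) := by
  unfold overlap
  rcases le_total (F i) (G j) with h1 | h1 <;>
    rcases le_total (F (i + 1)) (G (j + 1)) with h2 | h2 <;>
    rcases le_total (F (i + 1)) (G j) with h3 | h3 <;>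
    rcases le_total (F i) (G (j + 1)) with h4 | h4 <;>
    simp only [min_def, max_def] <;> split_ifs <;> linarith

lemma overlap_nonneg (hF : Monotone F) (hG : Monotone G) : 0 ≤ overlap F G i j := by
  rw [overlap_eq_max (hF i.le_succ) (hG j.le_succ)]
  exact le_max_left _ _

lemma lt_of_overlap_ne_zero (hF : Monotone F) (hG : Monotone G) (h : overlap F G i j ≠ 0) :
    max (F i) (G j) < min (F (i + 1)) (G (j + 1)) := by
  rw [overlap_eq_max (hF i.le_succ) (hG j.le_succ)] at h
  by_contra! hle
  exact h (max_eq_left (by linarith))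

lemma sum_overlap (hF : F i ≤ F (i + 1)) (h0 : G 0 ≤ F i) (hl : F (i + 1) ≤ G l) :
    ∑ j ∈ range l, overlap F G i j = F (i + 1) - F i := by
  unfold overlap
  rw [sum_range_sub (fun j => min (F (i + 1)) (G j) - min (F i) (G j)) l,
    min_eq_left hl, min_eq_left (hF.trans hl), min_eq_right h0, min_eq_right (h0.trans hF)]
  ring

lemma overlap_staircase (hF : Monotone F) (hG : Monotone G) {i' j' : ℕ}
    (h : overlap F G i j ≠ 0) (h' : overlap F G i' j' ≠ 0) (hi : i < i') : j ≤ j' := by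
  by_contra! hj
  have e := lt_of_overlap_ne_zero hF hG h
  have e' := lt_of_overlap_ne_zero hF hG h'
  have := hF (Nat.succ_le_of_lt hi)
  have := hG (Nat.succ_le_of_lt hj)
  simp only [max_lt_iff, lt_min_iff] at e e'
  linarith

end Overlap

def cumSum {k : ℕ} (x : Fin k → ℝ) (i : ℕ) : ℝ :=
  ∑ v ∈ univ.filter (fun v : Fin k => (v : ℕ) < i), x v

section CumSum

variable {k : ℕ} {x : Fin k → ℝ}

@[simp] lemma cumSum_zero : cumSum x 0 = 0 := by simp [cumSum]

lemma cumSum_of_le {i : ℕ} (hi : k ≤ i) : cumSum x i = ∑ v, x v := by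
  unfold cumSum
  rw [filter_true_of_mem fun v _ => v.isLt.trans_le hi]

lemma cumSum_succ (v : Fin k) : cumSum x (v + 1) = cumSum x v + x v := by
  unfold cumSum
  rw [add_comm (∑ _ ∈ _, _), ← sum_insert (by simp)]
  congr 1
  ext u
  simp [le_iff_eq_or_lt, Fin.val_inj]

lemma monotone_cumSum (hx : ∀ v, 0 ≤ x v) : Monotone (cumSum x) := fun _ _ hij =>
  sum_le_sum_of_subset_of_nonneg (monotone_filter_right _ fun _ _ h => h.trans_le hij)
    fun v _ _ => hx v

lemma cumSum_nonneg (hx : ∀ v, 0 ≤ x v) (i : ℕ) : 0 ≤ cumSum x i :=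
  sum_nonneg fun v _ => hx v

lemma cumSum_le_sum (hx : ∀ v, 0 ≤ x v) (i : ℕ) : cumSum x i ≤ ∑ v, x v :=
  sum_le_sum_of_subset_of_nonneg (filter_subset _ _) fun v _ _ => hx v

@[fun_prop]
lemma continuous_cumSum (i : ℕ) : Continuous fun x : Fin k → ℝ => cumSum x i :=
  continuous_finsetSum _ fun v _ => continuous_apply (A := fun _ : Fin k => ℝ) v

end CumSum

def coupling {k l : ℕ} (x : Fin k → ℝ) (y : Fin l → ℝ) (vw : Fin k × Fin l) : ℝ :=
  overlap (cumSum x) (cumSum y) vw.1 vw.2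

section Coupling

variable {k l : ℕ} {x : Fin k → ℝ} {y : Fin l → ℝ}

lemma coupling_swap (x : Fin k → ℝ) (y : Fin l → ℝ) (vw : Fin k × Fin l) :
    coupling x y vw = coupling y x vw.swap :=
  overlap_comm _ _ _ _

lemma coupling_nonneg (hx : x ∈ stdSimplex ℝ (Fin k)) (hy : y ∈ stdSimplex ℝ (Fin l))
    (vw : Fin k × Fin l) : 0 ≤ coupling x y vw :=
  overlap_nonneg (monotone_cumSum hx.1) (monotone_cumSum hy.1)

lemma sum_coupling_left (hx : x ∈ stdSimplex ℝ (Fin k)) (hy : y ∈ stdSimplex ℝ (Fin l))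
    (v : Fin k) : ∑ w, coupling x y (v, w) = x v := by
  unfold coupling
  rw [Fin.sum_univ_eq_sum_range (fun j => overlap (cumSum x) (cumSum y) v j),
    sum_overlap (monotone_cumSum hx.1 v.val.le_succ) (by simpa using cumSum_nonneg hx.1 v)
      (by simpa [cumSum_of_le le_rfl, hx.2, hy.2] using cumSum_le_sum hx.1 (v + 1)),
    cumSum_succ, add_sub_cancel_left]

lemma sum_coupling_right (hx : x ∈ stdSimplex ℝ (Fin k)) (hy : y ∈ stdSimplex ℝ (Fin l))
    (w : Fin l) : ∑ v, coupling x y (v, w) = y w := by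
  simp only [coupling_swap x y]
  exact sum_coupling_left hy hx w

lemma coupling_mem_stdSimplex (hx : x ∈ stdSimplex ℝ (Fin k))
    (hy : y ∈ stdSimplex ℝ (Fin l)) : coupling x y ∈ stdSimplex ℝ (Fin k × Fin l) :=
  ⟨coupling_nonneg hx hy, by simp only [Fintype.sum_prod_type, sum_coupling_left hx hy, hx.2]⟩

lemma ne_zero_of_coupling_ne_zero (hx : x ∈ stdSimplex ℝ (Fin k))
    (hy : y ∈ stdSimplex ℝ (Fin l)) {vw : Fin k × Fin l} (h : coupling x y vw ≠ 0) :
    x vw.1 ≠ 0 := by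
  have := lt_of_overlap_ne_zero (monotone_cumSum hx.1) (monotone_cumSum hy.1) h
  intro h0
  rw [cumSum_succ, h0, add_zero, max_lt_iff, lt_min_iff] at this
  exact lt_irrefl _ this.1.1

lemma isChain_coupling_support (hx : x ∈ stdSimplex ℝ (Fin k))
    (hy : y ∈ stdSimplex ℝ (Fin l)) : IsChain (· ≤ ·) {vw | coupling x y vw ≠ 0} := by
  have hF := monotone_cumSum hx.1
  have hG := monotone_cumSum hy.1
  intro a ha b hb _
  rcases lt_trichotomy a.1 b.1 with h | h | h
  · exact Or.inl ⟨h.le, overlap_staircase hF hG ha hb h⟩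
  · rcases le_total a.2 b.2 with h' | h'
    · exact Or.inl ⟨h.le, h'⟩
    · exact Or.inr ⟨h.ge, h'⟩
  · exact Or.inr ⟨h.le, overlap_staircase hF hG hb ha h⟩

lemma continuous_coupling (vw : Fin k × Fin l) :
    Continuous fun p : (Fin k → ℝ) × (Fin l → ℝ) => coupling p.1 p.2 vw := by
  unfold coupling overlap
  fun_prop

end Coupling

lemma nonempty_support_of_mem_stdSimplex {V : Type*} [Fintype V] {z : V → ℝ}
    (hz : z ∈ stdSimplex ℝ V) : (univ.filter fun v => z v ≠ 0).Nonempty := by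
  obtain ⟨v, -, hv⟩ := exists_ne_zero_of_sum_ne_zero (hz.2 ▸ one_ne_zero)
  exact ⟨v, mem_filter.2 ⟨mem_univ v, hv⟩⟩

section ChainCard

variable {α β : Type*} [LinearOrder α] [LinearOrder β]

lemma card_filter_le_le_of_le (s : Finset α) {a b : α} (hab : a ≤ b) :
    #(s.filter (· ≤ a)) ≤ #(s.filter (· ≤ b)) :=
  card_le_card (monotone_filter_right _ fun _ _ h => h.trans hab)

lemma card_filter_le_lt_of_lt {s : Finset α} {a b : α} (hb : b ∈ s) (hab : a < b) :
    #(s.filter (· ≤ a)) < #(s.filter (· ≤ b)) :=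
  card_lt_card ⟨monotone_filter_right _ fun _ _ h => h.trans hab.le,
    fun h => (mem_filter.1 (h (mem_filter.2 ⟨hb, le_rfl⟩))).2.not_gt hab⟩

lemma card_add_one_le_of_isChain {T : Finset (α × β)} (hne : T.Nonempty)
    (hT : IsChain (· ≤ ·) (T : Set (α × β))) :
    #T + 1 ≤ #(T.image Prod.fst) + #(T.image Prod.snd) := by
  set A := T.image Prod.fst
  set B := T.image Prod.snd
  -- `rank` is strictly monotone along the chain, with values in `[2, #A + #B]`.
  let rank : α × β → ℕ := fun p => #(A.filter (· ≤ p.1)) + #(B.filter (· ≤ p.2))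
  have hrank_lt : ∀ p ∈ T, ∀ q ∈ T, p < q → rank p < rank q := by
    intro p _ q hq hpq
    have hq₁ : q.1 ∈ A := mem_image_of_mem _ hq
    have hq₂ : q.2 ∈ B := mem_image_of_mem _ hq
    rcases Prod.lt_iff.1 hpq with ⟨h₁, h₂⟩ | ⟨h₁, h₂⟩
    · exact add_lt_add_of_lt_of_le (card_filter_le_lt_of_lt hq₁ h₁)
        (card_filter_le_le_of_le B h₂)
    · exact add_lt_add_of_le_of_lt (card_filter_le_le_of_le A h₁)
        (card_filter_le_lt_of_lt hq₂ h₂)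
  have hmaps : Set.MapsTo rank T (Icc 2 (#A + #B)) := by
    intro p hp
    have h₁ : 1 ≤ #(A.filter (· ≤ p.1)) :=
      card_pos.2 ⟨p.1, mem_filter.2 ⟨mem_image_of_mem _ hp, le_rfl⟩⟩
    have h₂ : 1 ≤ #(B.filter (· ≤ p.2)) :=
      card_pos.2 ⟨p.2, mem_filter.2 ⟨mem_image_of_mem _ hp, le_rfl⟩⟩
    exact mem_Icc.2 ⟨add_le_add h₁ h₂, add_le_add (card_filter_le _ _) (card_filter_le _ _)⟩
  have hinj : Set.InjOn rank T := by
    intro p hp q hq hpq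
    by_contra hne
    rcases hT.total hp hq with h | h
    · exact (hrank_lt p hp q hq (h.lt_of_ne hne)).ne hpq
    · exact (hrank_lt q hq p hp (h.lt_of_ne (Ne.symm hne))).ne hpq.symm
  have := card_le_card_of_injOn rank hmaps hinj
  rw [Nat.card_Icc] at this
  have : 1 ≤ #A := card_pos.2 (hne.image _)
  omega

end ChainCard

section EpsEmbedding

variable {X Y Z P Q : Type*}

lemma diamOn_mono (d : Z → Z → ℝ) {S T : Set Z} (h : S ⊆ T) : diamOn d S ≤ diamOn d T :=
  iSup₂_le fun x hx => iSup₂_le fun y hy =>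
    le_iSup₂_of_le x (h hx) (le_iSup₂_of_le y (h hy) le_rfl)

lemma diamOn_empty (d : Z → Z → ℝ) : diamOn d (∅ : Set Z) = 0 := by
  simp [diamOn]

lemma diamOn_prod_le (d₁ : X → X → ℝ) (d₂ : Y → Y → ℝ) (A : Set X) (B : Set Y) :
    diamOn (fun p q : X × Y => max (d₁ p.1 q.1) (d₂ p.2 q.2)) (A ×ˢ B) ≤
      max (diamOn d₁ A) (diamOn d₂ B) := by
  refine iSup₂_le fun p hp => iSup₂_le fun q hq => ?_
  rw [ENNReal.ofReal_max]
  exact max_le_max (le_iSup₂_of_le p.1 hp.1 (le_iSup₂_of_le q.1 hq.1 le_rfl))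
    (le_iSup₂_of_le p.2 hp.2 (le_iSup₂_of_le q.2 hq.2 le_rfl))

variable [TopologicalSpace X] [TopologicalSpace Y] [TopologicalSpace Z] [TopologicalSpace P]
  [TopologicalSpace Q] {ε : ℝ}

lemma IsEpsEmbedding.comp (hε : 0 < ε) {d : Z → Z → ℝ} {f : Z → P}
    (hf : IsEpsEmbedding d ε f) {φ : P → Q} (hφ : Continuous φ)
    (hφi : Function.Injective φ) :
    IsEpsEmbedding d ε (φ ∘ f) := by
  refine ⟨hφ.comp hf.1, fun q => ?_⟩
  rcases (φ ∘ f ⁻¹' {q}).eq_empty_or_nonempty with h | ⟨z, hz⟩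
  · rw [h, diamOn_empty]
    exact ENNReal.ofReal_pos.2 hε
  · refine (diamOn_mono d fun w hw => ?_).trans_lt (hf.2 (f z))
    exact hφi (hw.trans hz.symm)

lemma IsEpsEmbedding.prodMap {d₁ : X → X → ℝ} {d₂ : Y → Y → ℝ} {f : X → P}
    {g : Y → Q} (hf : IsEpsEmbedding d₁ ε f) (hg : IsEpsEmbedding d₂ ε g) :
    IsEpsEmbedding (fun p q : X × Y => max (d₁ p.1 q.1) (d₂ p.2 q.2)) ε (Prod.map f g) := by
  refine ⟨hf.1.prodMap hg.1, fun ⟨a, b⟩ => ?_⟩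
  rw [← Set.singleton_prod_singleton, Set.preimage_prod_map_prod]
  exact (diamOn_prod_le d₁ d₂ _ _).trans_lt (max_lt (hf.2 a) (hg.2 b))

end EpsEmbedding

namespace FinSimpComplex

section Support

variable {V : Type} [Fintype V]

lemma space_subset_stdSimplex (K : FinSimpComplex V) : K.space ⊆ stdSimplex ℝ V :=
  fun _ hx => ⟨hx.1, hx.2.1⟩

lemma mem_space_iff {K : FinSimpComplex V} {z : V → ℝ} (hz : z ∈ stdSimplex ℝ V) :
    z ∈ K.space ↔ (univ.filter fun v => z v ≠ 0) ∈ K.faces := by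
  refine ⟨fun ⟨_, _, s, hs, hsupp⟩ => ?_, fun h => ⟨hz.1, hz.2, _, h, fun v hv => ?_⟩⟩
  · exact K.down_closed s hs _ (fun v hv => hsupp v (mem_filter.1 hv).2)
      (nonempty_support_of_mem_stdSimplex hz)
  · exact mem_filter.2 ⟨mem_univ v, hv⟩

end Support

section Transport

variable {V W : Type} [DecidableEq W]

def mapEquiv (e : V ≃ W) (K : FinSimpComplex V) : FinSimpComplex W where
  faces := K.faces.image (map e.toEmbedding)
  nonempty_of_mem s hs := by
    obtain ⟨t, ht, rfl⟩ := mem_image.1 hs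
    exact (K.nonempty_of_mem t ht).map
  down_closed s hs t hts htne := by
    obtain ⟨u, hu, rfl⟩ := mem_image.1 hs
    refine mem_image.2 ⟨t.map e.symm.toEmbedding, K.down_closed u hu _ ?_ htne.map, ?_⟩
    · simpa [← map_subset_map (f := e.toEmbedding), map_map] using hts
    · simp [map_map]

lemma dimLE_mapEquiv (e : V ≃ W) {K : FinSimpComplex V} {n : ℕ} (h : K.dimLE n) :
    (K.mapEquiv e).dimLE n := by
  intro s hs
  obtain ⟨t, ht, rfl⟩ := mem_image.1 hs
  simpa using h t ht

variable [Fintype V] [Fintype W]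

def spaceMapEquiv (e : V ≃ W) (K : FinSimpComplex V) (x : K.space) : (K.mapEquiv e).space :=
  ⟨fun w => (x : V → ℝ) (e.symm w), fun w => x.2.1 _,
    by rw [e.symm.sum_comp (x : V → ℝ)]; exact x.2.2.1, by
      obtain ⟨s, hs, hsupp⟩ := x.2.2.2
      exact ⟨s.map e.toEmbedding, mem_image_of_mem _ hs, fun w hw =>
        mem_map.2 ⟨e.symm w, hsupp _ hw, e.apply_symm_apply w⟩⟩⟩

lemma continuous_spaceMapEquiv (e : V ≃ W) (K : FinSimpComplex V) :
    Continuous (K.spaceMapEquiv e) :=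
  Continuous.subtype_mk (continuous_pi fun w => (continuous_apply (e.symm w)).comp
    continuous_subtype_val : Continuous fun (x : K.space) w => (x : V → ℝ) (e.symm w)) _

lemma spaceMapEquiv_injective (e : V ≃ W) (K : FinSimpComplex V) :
    Function.Injective (K.spaceMapEquiv e) := fun x y h =>
  Subtype.ext <| funext fun v => by
    simpa [spaceMapEquiv] using congrFun (congrArg Subtype.val h) (e v)

end Transport

section Staircase

variable {V W : Type} [Fintype V] [Fintype W] [LinearOrder V] [LinearOrder W]

open Classical in
noncomputable def staircaseProd (K : FinSimpComplex V) (L : FinSimpComplex W) :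
    FinSimpComplex (V × W) where
  faces := univ.filter fun T => T.Nonempty ∧ T.image Prod.fst ∈ K.faces ∧
    T.image Prod.snd ∈ L.faces ∧ IsChain (· ≤ ·) (T : Set (V × W))
  nonempty_of_mem _ hs := (mem_filter.1 hs).2.1
  down_closed s hs t hts htne := by
    obtain ⟨-, -, h₁, h₂, hch⟩ := mem_filter.1 hs
    exact mem_filter.2 ⟨mem_univ _, htne,
      K.down_closed _ h₁ _ (image_subset_image hts) (htne.image _),
      L.down_closed _ h₂ _ (image_subset_image hts) (htne.image _),
      hch.mono (coe_subset.2 hts)⟩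

variable {K : FinSimpComplex V} {L : FinSimpComplex W}

lemma mem_staircaseProd_faces {T : Finset (V × W)} :
    T ∈ (K.staircaseProd L).faces ↔ T.Nonempty ∧ T.image Prod.fst ∈ K.faces ∧
      T.image Prod.snd ∈ L.faces ∧ IsChain (· ≤ ·) (T : Set (V × W)) := by
  simp [staircaseProd]

lemma dimLE_staircaseProd {n m : ℕ} (hK : K.dimLE n) (hL : L.dimLE m) :
    (K.staircaseProd L).dimLE (n + m) := by
  intro T hT
  obtain ⟨hne, h₁, h₂, hch⟩ := mem_staircaseProd_faces.1 hT
  have := card_add_one_le_of_isChain hne hch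
  have := hK _ h₁
  have := hL _ h₂
  omega

end Staircase

section CouplingPoint

variable {k l : ℕ} (K : FinSimpComplex (Fin k)) (L : FinSimpComplex (Fin l))

lemma coupling_mem_space {x : Fin k → ℝ} {y : Fin l → ℝ} (hx : x ∈ K.space)
    (hy : y ∈ L.space) : coupling x y ∈ (K.staircaseProd L).space := by
  have hx' := K.space_subset_stdSimplex hx
  have hy' := L.space_subset_stdSimplex hy
  have hc := coupling_mem_stdSimplex hx' hy'
  set S := univ.filter fun vw => coupling x y vw ≠ 0
  have hS : S.Nonempty := nonempty_support_of_mem_stdSimplex hc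
  have hS₁ : S.image Prod.fst ⊆ univ.filter fun v => x v ≠ 0 := fun v hv => by
    obtain ⟨vw, hvw, rfl⟩ := mem_image.1 hv
    exact mem_filter.2 ⟨mem_univ _, ne_zero_of_coupling_ne_zero hx' hy' (mem_filter.1 hvw).2⟩
  have hS₂ : S.image Prod.snd ⊆ univ.filter fun w => y w ≠ 0 := fun w hw => by
    obtain ⟨vw, hvw, rfl⟩ := mem_image.1 hw
    have := (mem_filter.1 hvw).2
    rw [coupling_swap] at this
    exact mem_filter.2 ⟨mem_univ _, ne_zero_of_coupling_ne_zero hy' hx' this⟩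
  refine (mem_space_iff hc).2 (mem_staircaseProd_faces.2 ⟨hS, ?_, ?_, ?_⟩)
  · exact K.down_closed _ ((mem_space_iff hx').1 hx) _ hS₁ (hS.image _)
  · exact L.down_closed _ ((mem_space_iff hy').1 hy) _ hS₂ (hS.image _)
  · exact (isChain_coupling_support hx' hy').mono fun vw h => (mem_filter.1 h).2

def couplingPoint (p : K.space × L.space) : (K.staircaseProd L).space :=
  ⟨coupling p.1 p.2, coupling_mem_space K L p.1.2 p.2.2⟩

lemma continuous_couplingPoint : Continuous (couplingPoint K L) :=
  (continuous_pi fun vw => (continuous_coupling vw).comp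
    (continuous_subtype_val.prodMap continuous_subtype_val)).subtype_mk _

lemma couplingPoint_injective : Function.Injective (couplingPoint K L) := by
  rintro ⟨x, y⟩ ⟨x', y'⟩ h
  have h' : coupling (x : Fin k → ℝ) (y : Fin l → ℝ) =
      coupling (x' : Fin k → ℝ) (y' : Fin l → ℝ) := congrArg Subtype.val h
  have hx := K.space_subset_stdSimplex x.2
  have hy := L.space_subset_stdSimplex y.2
  have hx' := K.space_subset_stdSimplex x'.2
  have hy' := L.space_subset_stdSimplex y'.2
  refine Prod.ext (Subtype.ext (funext fun v => ?_)) (Subtype.ext (funext fun w => ?_))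
  · rw [← sum_coupling_left hx hy, ← sum_coupling_left hx' hy', h']
  · rw [← sum_coupling_right hx hy, ← sum_coupling_right hx' hy', h']

end CouplingPoint

end FinSimpComplex

lemma widim_le_of_isEpsEmbedding {Z : Type*} [TopologicalSpace Z] {d : Z → Z → ℝ} {ε : ℝ}
    (hε : 0 < ε) {V : Type} [Fintype V] {K : FinSimpComplex V} {n : ℕ} (hK : K.dimLE n)
    {f : Z → K.space} (hf : IsEpsEmbedding d ε f) : widim Z d ε ≤ n := by
  let e := Fintype.equivFin V
  exact sInf_le ⟨n, rfl, _, K.mapEquiv e, K.spaceMapEquiv e ∘ f,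
    FinSimpComplex.dimLE_mapEquiv e hK,
    hf.comp hε (K.continuous_spaceMapEquiv e) (K.spaceMapEquiv_injective e)⟩

/-- **Lemma 2.1.** For metric spaces `(X,d)` and `(Y,d')`, with the max metric on `X × Y`,
`widim_ε(X × Y, d×d') ≤ widim_ε(X,d) + widim_ε(Y,d')` for every `ε > 0`. -/
theorem widim_prod_le {X Y : Type*} [MetricSpace X] [MetricSpace Y]
    (ε : ℝ) (hε : 0 < ε) :
    widim (X × Y) (fun p q => max (dist p.1 q.1) (dist p.2 q.2)) ε ≤
      widim X dist ε + widim Y dist ε := by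
  rw [widim.eq_1 X, widim.eq_1 Y, ENNReal.sInf_add]
  refine le_iInf₂ fun _ ⟨n, hn, k, K, f, hK, hf⟩ => ?_
  rw [ENNReal.add_sInf]
  refine le_iInf₂ fun _ ⟨m, hm, l, L, g, hL, hg⟩ => ?_
  subst hn hm
  exact_mod_cast widim_le_of_isEpsEmbedding hε (FinSimpComplex.dimLE_staircaseProd hK hL)
    ((hf.prodMap hg).comp hε (K.continuous_couplingPoint L) (K.couplingPoint_injective L))
end

section
/- Let K be a finite simplicial complex with a metric d and let ε > 0 satisfy max_{v∈V(K)} diam st(v) < ε, where st(v) is the star of the vertex v. Let m be a natural number and suppose V(K) = A₁ ∪ A₂ ∪ ⋯ ∪ A_m is a partition of the vertex set into disjoint subsets. Then there exists a simplicial map f : K → Δ^{m−1} (the standard (m−1)-simplex) such that for every p ∈ Δ^{m−1} one has widim_ε(f⁻¹(p), d) ≤ max_{1≤i≤m} dim K(A_i), where K(A_i) denotes the full subcomplex of K spanned by A_i. -/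
open scoped ENNReal

/-- The simplicial map `K → Δ^{m-1}` induced by a vertex map `φ : V → Fin m`
(affine extension on each simplex). -/
noncomputable def inducedMap {V : Type} [Fintype V] [DecidableEq V]
    (K : FinSimpComplex V) {m : ℕ} (φ : V → Fin m) (x : ↥K.space) :
    ↥(stdSimplex ℝ (Fin m)) :=
  ⟨fun i => ∑ v ∈ Finset.univ.filter (fun v => φ v = i), (x : V → ℝ) v, by
    obtain ⟨h1, h2, -⟩ := x.2
    refine ⟨fun i => Finset.sum_nonneg fun v _ => h1 v, ?_⟩
    show ∑ i, ∑ v ∈ Finset.univ.filter (fun v => φ v = i), (x : V → ℝ) v = 1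
    rw [Finset.sum_fiberwise]
    exact h2⟩
/-- Auxiliary: push a simplicial complex forward along an equivalence of vertex types. -/
def FinSimpComplex.pushC {V : Type} [DecidableEq V] {k : ℕ} (e : V ≃ Fin k)
    (K : FinSimpComplex V) : FinSimpComplex (Fin k) where
  faces := K.faces.image fun s => s.image e
  nonempty_of_mem s hs := by
    obtain ⟨t, ht, rfl⟩ := Finset.mem_image.1 hs
    exact (K.nonempty_of_mem t ht).image e
  down_closed s hs u hus hune := by
    obtain ⟨t, ht, rfl⟩ := Finset.mem_image.1 hs
    refine Finset.mem_image.2 ⟨u.image e.symm, K.down_closed t ht _ ?_ (hune.image _), ?_⟩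
    · intro v hv
      obtain ⟨j, hj, rfl⟩ := Finset.mem_image.1 hv
      obtain ⟨w, hw, hwj⟩ := Finset.mem_image.1 (hus hj)
      rw [← hwj]
      simpa using hw
    · rw [Finset.image_image]
      simp

/-- **Lemma 3.2 (first variation of Gromov's lemma).** Let `K` be a finite simplicial complex
with a metric `d` and let `ε > 0` satisfy `max_{v ∈ V(K)} diam st(v) < ε`. Given a partition
`V(K) = A₁ ∪ ⋯ ∪ A_m` of the vertex set into disjoint subsets, there is a simplicial map
`f : K → Δ^{m-1}` (induced by a vertex map `φ : V → Fin m` and affine extension) such that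
`widim_ε(f⁻¹(p), d) ≤ max_{1 ≤ i ≤ m} dim K(A_i)` for every `p ∈ Δ^{m-1}`, where `K(A_i)` is
the full subcomplex spanned by `A_i`. -/
theorem gromov_lemma_partition {V : Type} [Fintype V] [DecidableEq V]
    (K : FinSimpComplex V) (d : ↥K.space → ↥K.space → ℝ)
    (hd : IsCompatibleMetric d) (ε : ℝ) (hε : 0 < ε)
    (hstar : ∀ v ∈ K.vertexSet, diamOn d (K.star v) < ENNReal.ofReal ε)
    {m : ℕ} (hm : 0 < m) (A : Fin m → Finset V)
    (hdisj : ∀ i j : Fin m, i ≠ j → Disjoint (A i) (A j))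
    (hcover : Finset.univ.biUnion A = K.vertexSet) :
    ∃ φ : V → Fin m, ∀ p : ↥(stdSimplex ℝ (Fin m)),
      widim ↥(inducedMap K φ ⁻¹' {p}) (fun a b => d a.1 b.1) ε ≤
        ((Finset.univ.sup fun i : Fin m => (K.fullSub (A i)).dim : ℕ) : ℝ≥0∞) := by
  classical
  set n : ℕ := Finset.univ.sup fun i : Fin m => (K.fullSub (A i)).dim with hn
  -- the vertex map
  set φ : V → Fin m := fun v => if h : ∃ i, v ∈ A i then h.choose else ⟨0, hm⟩ with hφdef
  have huniq : ∀ (v : V) (i j : Fin m), v ∈ A i → v ∈ A j → i = j := by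
    intro v i j hi hj
    by_contra hne
    exact (Finset.disjoint_left.1 (hdisj i j hne) hi) hj
  have hφ : ∀ {v : V} {i : Fin m}, v ∈ A i → φ v = i := by
    intro v i hv
    have h : ∃ i, v ∈ A i := ⟨i, hv⟩
    simp only [hφdef, dif_pos h]
    exact huniq v _ _ h.choose_spec hv
  have hAφ : ∀ v ∈ K.vertexSet, v ∈ A (φ v) := by
    intro v hv
    rw [← hcover] at hv
    obtain ⟨i, -, hi⟩ := Finset.mem_biUnion.1 hv
    rw [hφ hi]; exact hi
  have hvert : ∀ {x : V → ℝ}, x ∈ K.space → ∀ {v}, x v ≠ 0 → v ∈ K.vertexSet := by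
    rintro x ⟨-, -, s, hs, hsupp⟩ v hv
    exact Finset.mem_filter.2 ⟨Finset.mem_univ v,
      K.down_closed s hs {v} (Finset.singleton_subset_iff.2 (hsupp v hv))
        ⟨v, Finset.mem_singleton_self v⟩⟩
  have hsum : ∀ {x : V → ℝ}, x ∈ K.space → ∀ i : Fin m,
      ∑ v ∈ Finset.univ.filter (fun v => φ v = i), x v = ∑ v ∈ A i, x v := by
    intro x hx i
    rw [Finset.sum_filter,
      show ∑ v ∈ A i, x v = ∑ v ∈ Finset.univ, if v ∈ A i then x v else 0 by
        rw [Finset.sum_ite_mem, Finset.univ_inter]]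
    refine Finset.sum_congr rfl fun v _ => ?_
    by_cases hxv : x v = 0
    · split_ifs <;> simp [hxv]
    · have h1 : v ∈ A (φ v) := hAφ v (hvert hx hxv)
      by_cases hiv : φ v = i
      · rw [hiv] at h1
        simp [hiv, h1]
      · have h2 : v ∉ A i := fun hvA => hiv (hφ hvA)
        simp [hiv, h2]
  refine ⟨φ, fun p => ?_⟩
  obtain ⟨i₀, hp0⟩ : ∃ i, p.1 i ≠ 0 := by
    by_contra h
    push_neg at h
    have h2 := p.2.2
    rw [Finset.sum_congr rfl fun i _ => h i] at h2
    simp at h2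
  set e := Fintype.equivFin V with he
  set L := FinSimpComplex.pushC e (K.fullSub (A i₀)) with hL
  set X := ↥(inducedMap K φ ⁻¹' {p}) with hX
  have hfib : ∀ a : X, ∑ v ∈ A i₀, (a.1 : V → ℝ) v = p.1 i₀ := by
    intro a
    have h1 : inducedMap K φ a.1 = p := a.2
    have h2 : (inducedMap K φ a.1).1 i₀ = p.1 i₀ := by rw [h1]
    rw [← h2]
    exact (hsum a.1.2 i₀).symm
  have key : ∀ a : X,
      (fun j => if e.symm j ∈ A i₀ then (a.1 : V → ℝ) (e.symm j) / p.1 i₀ else 0)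
        ∈ L.space := by
    intro a
    obtain ⟨h0, h1, s, hs, hsupp⟩ := a.1.2
    refine ⟨fun j => ?_, ?_, ?_⟩
    · dsimp only
      split_ifs
      · exact div_nonneg (h0 _) (p.2.1 i₀)
      · exact le_refl 0
    · rw [Equiv.sum_comp e.symm (fun v => if v ∈ A i₀ then (a.1 : V → ℝ) v / p.1 i₀ else 0),
        Finset.sum_ite_mem, Finset.univ_inter, ← Finset.sum_div, hfib a, div_self hp0]
    · obtain ⟨v0, hv0A, hv0⟩ : ∃ v ∈ A i₀, (a.1 : V → ℝ) v ≠ 0 := by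
        by_contra h
        push_neg at h
        exact hp0 ((hfib a).symm.trans (Finset.sum_eq_zero h))
      have htne : (s ∩ A i₀).Nonempty := ⟨v0, Finset.mem_inter.2 ⟨hsupp v0 hv0, hv0A⟩⟩
      have htK : s ∩ A i₀ ∈ (K.fullSub (A i₀)).faces :=
        Finset.mem_filter.2 ⟨K.down_closed s hs _ Finset.inter_subset_left htne,
          Finset.inter_subset_right⟩
      refine ⟨(s ∩ A i₀).image e, Finset.mem_image_of_mem _ htK, fun j hj => ?_⟩
      by_cases hjA : e.symm j ∈ A i₀
      · simp only [if_pos hjA] at hj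
        have hxj : (a.1 : V → ℝ) (e.symm j) ≠ 0 := fun h => hj (by rw [h, zero_div])
        refine Finset.mem_image.2 ⟨e.symm j,
          Finset.mem_inter.2 ⟨hsupp _ hxj, hjA⟩, by simp⟩
      · simp only [if_neg hjA] at hj
        exact absurd rfl hj
  set g : X → ↥L.space := fun a => ⟨_, key a⟩ with hg
  refine sInf_le ⟨n, rfl, Fintype.card V, L, g, ?_, ?_, ?_⟩
  · -- dimension bound
    intro s hs
    obtain ⟨t, ht, rfl⟩ := Finset.mem_image.1 hs
    have htne := (K.fullSub (A i₀)).nonempty_of_mem t ht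
    have h1 : t.card - 1 ≤ (K.fullSub (A i₀)).dim := Finset.le_sup (f := fun s => s.card - 1) ht
    have h2 : (K.fullSub (A i₀)).dim ≤ n := Finset.le_sup (f := fun i => (K.fullSub (A i)).dim) (Finset.mem_univ i₀)
    have h3 : 1 ≤ t.card := Finset.card_pos.2 htne
    rw [Finset.card_image_of_injective t e.injective]
    omega
  · -- continuity
    refine Continuous.subtype_mk (continuous_pi fun j => ?_) _
    by_cases hjA : e.symm j ∈ A i₀
    · simp only [if_pos hjA]
      exact (((continuous_apply (e.symm j)).comp continuous_subtype_val).comp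
        continuous_subtype_val).div_const _
    · simp only [if_neg hjA]
      exact continuous_const
  · -- fibers have small diameter
    intro q
    rcases Set.eq_empty_or_nonempty (g ⁻¹' {q}) with hq | ⟨a₀, ha₀⟩
    · rw [hq]
      simpa [diamOn] using ENNReal.ofReal_pos.2 hε
    · obtain ⟨v0, hv0A, hv0⟩ : ∃ v ∈ A i₀, (a₀.1 : V → ℝ) v ≠ 0 := by
        by_contra h
        push_neg at h
        exact hp0 ((hfib a₀).symm.trans (Finset.sum_eq_zero h))
      have hv0vert : v0 ∈ K.vertexSet := hvert a₀.1.2 hv0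
      have hmem : ∀ b ∈ g ⁻¹' {q}, (b.1 : ↥K.space) ∈ K.star v0 := by
        intro b hb
        have hgb : g b = g a₀ := by
          rw [Set.mem_preimage, Set.mem_singleton_iff] at hb ha₀
          rw [hb, ha₀]
        have h2 := congrArg (fun z : ↥L.space => (z : Fin (Fintype.card V) → ℝ) (e v0)) hgb
        simp only [hg, Equiv.symm_apply_apply, if_pos hv0A] at h2
        have h3 : (b.1 : V → ℝ) v0 = (a₀.1 : V → ℝ) v0 := by
          have := congrArg (· * p.1 i₀) h2
          simpa [div_mul_cancel₀, hp0] using this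
        show (b.1 : V → ℝ) v0 ≠ 0
        rw [h3]
        exact hv0
      calc diamOn (fun a b : X => d a.1 b.1) (g ⁻¹' {q})
          ≤ diamOn d (K.star v0) := by
            refine iSup₂_le fun a ha => iSup₂_le fun b hb => ?_
            exact le_iSup₂_of_le a.1 (hmem a ha)
              (le_iSup₂_of_le b.1 (hmem b hb) le_rfl)
        _ < ENNReal.ofReal ε := hstar v0 hv0vert
end

section
/- Let K be a finite simplicial complex with a metric d, let ε > 0, and let m be a natural number. Then there exist a subdivision K̃ of K (i.e., a simplicial complex whose underlying topological space is K, obtained by iterated barycentric subdivision) and a simplicial map f : K̃ → Δ^{m−1} such that for every point p ∈ Δ^{m−1} one has widim_ε(f⁻¹(p), d) ≤ (dim K)/m. -/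
open scoped ENNReal

/-- A finite simplicial complex together with a geometric realization of its vertices in an
ambient real vector space `E`. -/
structure RealizedComplex (E : Type*) : Type _ where
  VV : Type
  fin : Fintype VV
  deq : DecidableEq VV
  K : FinSimpComplex VV
  pos : VV → E

attribute [instance] RealizedComplex.fin RealizedComplex.deq

namespace RealizedComplex

/-- The affine map from the abstract realization of `C.K` to the ambient space `E`,
sending barycentric coordinates to the corresponding convex combination of vertex positions. -/
noncomputable def geomMap {E : Type*} [AddCommGroup E] [Module ℝ E]
    (C : RealizedComplex E) (x : ↥C.K.space) : E :=
  ∑ v : C.VV, (x : C.VV → ℝ) v • C.pos v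

/-- The barycentric subdivision of a realized complex: vertices are the faces of `C.K`,
positioned at barycenters, and faces are flags (chains) of faces of `C.K`. -/
noncomputable def bary {E : Type*} [AddCommGroup E] [Module ℝ E]
    (C : RealizedComplex E) : RealizedComplex E where
  VV := {s : Finset C.VV // s ∈ C.K.faces}
  fin := inferInstance
  deq := inferInstance
  K :=
    { faces := Finset.univ.filter fun c : Finset {s : Finset C.VV // s ∈ C.K.faces} =>
        c.Nonempty ∧ ∀ s ∈ c, ∀ t ∈ c, s.1 ⊆ t.1 ∨ t.1 ⊆ s.1
      nonempty_of_mem := fun s hs => (Finset.mem_filter.1 hs).2.1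
      down_closed := fun s hs t hts htne => Finset.mem_filter.2
        ⟨Finset.mem_univ _, htne, fun a ha b hb =>
          (Finset.mem_filter.1 hs).2.2 a (hts ha) b (hts hb)⟩ }
  pos := fun s => (s.1.card : ℝ)⁻¹ • ∑ v ∈ s.1, C.pos v

/-- Iterated barycentric subdivision. -/
noncomputable def iterBary {E : Type*} [AddCommGroup E] [Module ℝ E]
    (C : RealizedComplex E) : ℕ → RealizedComplex E
  | 0 => C
  | (j + 1) => (C.iterBary j).bary

end RealizedComplex

/-- The canonical realization of an abstract complex `K` on `V`, with vertices at the
standard basis vectors of `V → ℝ`. -/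
noncomputable def FinSimpComplex.toRealized {V : Type} [Fintype V] [DecidableEq V]
    (K : FinSimpComplex V) : RealizedComplex (V → ℝ) :=
  ⟨V, inferInstance, inferInstance, K, fun v w => if v = w then 1 else 0⟩
section GromovAux

open Finset

/-- Finset support of a real-valued function on a fintype. -/
noncomputable def fsupp {α : Type*} [Fintype α] (x : α → ℝ) : Finset α :=
  Finset.univ.filter fun a => x a ≠ 0

lemma mem_fsupp {α : Type*} [Fintype α] {x : α → ℝ} {a : α} : a ∈ fsupp x ↔ x a ≠ 0 := by
  simp [fsupp]

/-- Barycentric weight of a finset. -/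
noncomputable def wt {V : Type} [DecidableEq V] (s : Finset V) (v : V) : ℝ :=
  if v ∈ s then (s.card : ℝ)⁻¹ else 0

lemma wt_nonneg {V : Type} [DecidableEq V] (s : Finset V) (v : V) : 0 ≤ wt s v := by
  unfold wt; split
  · positivity
  · exact le_refl 0

lemma sum_wt {V : Type} [Fintype V] [DecidableEq V] {s : Finset V} (hs : s.Nonempty) :
    ∑ v, wt s v = 1 := by
  have hc : (s.card : ℝ) ≠ 0 := by
    exact_mod_cast (Finset.card_pos.mpr hs).ne'
  unfold wt
  rw [Finset.sum_ite_mem, Finset.univ_inter, Finset.sum_const, nsmul_eq_mul,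
    mul_inv_cancel₀ hc]

namespace RealizedComplex

variable {E : Type*} [AddCommGroup E] [Module ℝ E] (C : RealizedComplex E)

lemma bary_faces_iff {c : Finset C.bary.VV} :
    c ∈ C.bary.K.faces ↔ c.Nonempty ∧ ∀ s ∈ c, ∀ t ∈ c, s.1 ⊆ t.1 ∨ t.1 ⊆ s.1 := by
  have := @Finset.mem_filter_univ (Finset {s : Finset C.VV // s ∈ C.K.faces}) _
    (fun c => c.Nonempty ∧ ∀ s ∈ c, ∀ t ∈ c, s.1 ⊆ t.1 ∨ t.1 ⊆ s.1) _ c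
  exact this

lemma bary_vert_mem (u : C.bary.VV) : u.1 ∈ C.K.faces := u.2

lemma bary_vert_nonempty (u : C.bary.VV) : u.1.Nonempty := C.K.nonempty_of_mem _ u.2

/-- The map from barycentric coordinates on the subdivision to barycentric coordinates
on the original complex. -/
noncomputable def toPrevFun (y : C.bary.VV → ℝ) (v : C.VV) : ℝ :=
  ∑ u : C.bary.VV, y u * wt u.1 v

lemma toPrevFun_nonneg {y : C.bary.VV → ℝ} (hy : ∀ u, 0 ≤ y u) (v : C.VV) :
    0 ≤ C.toPrevFun y v :=
  Finset.sum_nonneg fun u _ => mul_nonneg (hy u) (wt_nonneg _ _)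

lemma sum_toPrevFun (y : C.bary.VV → ℝ) : ∑ v, C.toPrevFun y v = ∑ u, y u := by
  unfold toPrevFun
  rw [Finset.sum_comm]
  refine Finset.sum_congr rfl fun u _ => ?_
  rw [← Finset.mul_sum, sum_wt (C.bary_vert_nonempty u), mul_one]

lemma toPrevFun_ne_zero {y : C.bary.VV → ℝ} {v : C.VV} (h : C.toPrevFun y v ≠ 0) :
    ∃ u, y u ≠ 0 ∧ v ∈ u.1 := by
  by_contra hc
  push_neg at hc
  refine h (Finset.sum_eq_zero fun u _ => ?_)
  by_cases hyu : y u = 0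
  · rw [hyu, zero_mul]
  · have : v ∉ u.1 := fun hv => (hc u hyu) hv
    simp [wt, this]

lemma toPrevFun_pos {y : C.bary.VV → ℝ} (hy : ∀ u, 0 ≤ y u) {u : C.bary.VV} {v : C.VV}
    (hyu : y u ≠ 0) (hv : v ∈ u.1) : 0 < C.toPrevFun y v := by
  have hcard : (0 : ℝ) < (u.1.card : ℝ) := by
    exact_mod_cast Finset.card_pos.mpr ⟨v, hv⟩
  have hterm : 0 < y u * wt u.1 v := by
    have : wt u.1 v = (u.1.card : ℝ)⁻¹ := if_pos hv
    rw [this]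
    exact mul_pos (lt_of_le_of_ne (hy u) (Ne.symm hyu)) (inv_pos.mpr hcard)
  calc (0:ℝ) < y u * wt u.1 v := hterm
    _ ≤ ∑ u', y u' * wt u'.1 v :=
      Finset.single_le_sum (fun u' _ => mul_nonneg (hy u') (wt_nonneg _ _)) (Finset.mem_univ u)

/-- In a flag, there is a maximal element. -/
lemma exists_top {c : Finset C.bary.VV} (hne : c.Nonempty)
    (hc : ∀ s ∈ c, ∀ t ∈ c, s.1 ⊆ t.1 ∨ t.1 ⊆ s.1) :
    ∃ M ∈ c, ∀ u ∈ c, u.1 ⊆ M.1 := by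
  obtain ⟨M, hM, hmax⟩ := c.exists_max_image (fun u => u.1.card) hne
  refine ⟨M, hM, fun u hu => ?_⟩
  rcases hc u hu M hM with h | h
  · exact h
  · exact Finset.subset_of_eq (Finset.eq_of_subset_of_card_le h (hmax u hu)).symm

lemma toPrevFun_mem {y : C.bary.VV → ℝ} (hy : y ∈ C.bary.K.space) :
    C.toPrevFun y ∈ C.K.space := by
  obtain ⟨h1, h2, c, hc, hsupp⟩ := hy
  obtain ⟨hcne, hflag⟩ := (C.bary_faces_iff).mp hc
  obtain ⟨M, hMc, hMtop⟩ := C.exists_top hcne hflag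
  refine ⟨C.toPrevFun_nonneg h1, by rw [C.sum_toPrevFun]; exact h2, M.1, M.2, fun v hv => ?_⟩
  obtain ⟨u, hyu, hvu⟩ := C.toPrevFun_ne_zero hv
  exact hMtop u (hsupp u hyu) hvu

noncomputable def toPrev (x : ↥C.bary.K.space) : ↥C.K.space :=
  ⟨C.toPrevFun x.1, C.toPrevFun_mem x.2⟩

lemma bary_pos_eq (u : C.bary.VV) : C.bary.pos u = ∑ v : C.VV, wt u.1 v • C.pos v := by
  show (u.1.card : ℝ)⁻¹ • ∑ w ∈ u.1, C.pos w = _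
  have : ∀ v : C.VV, wt u.1 v • C.pos v
      = if v ∈ u.1 then (u.1.card : ℝ)⁻¹ • C.pos v else 0 := by
    intro v; unfold wt; split <;> simp
  rw [Finset.sum_congr rfl fun v _ => this v, Finset.sum_ite_mem, Finset.univ_inter,
    Finset.smul_sum]

lemma geomMap_bary_eq (x : ↥C.bary.K.space) :
    C.bary.geomMap x = C.geomMap (C.toPrev x) := by
  show ∑ u : C.bary.VV, x.1 u • C.bary.pos u = ∑ v : C.VV, C.toPrevFun x.1 v • C.pos v
  calc ∑ u : C.bary.VV, x.1 u • C.bary.pos u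
      = ∑ u : C.bary.VV, ∑ v : C.VV, (x.1 u * wt u.1 v) • C.pos v := by
        refine Finset.sum_congr rfl fun u _ => ?_
        rw [C.bary_pos_eq u, Finset.smul_sum]
        exact Finset.sum_congr rfl fun v _ => (smul_smul _ _ _)
    _ = ∑ v : C.VV, ∑ u : C.bary.VV, (x.1 u * wt u.1 v) • C.pos v := Finset.sum_comm
    _ = ∑ v : C.VV, C.toPrevFun x.1 v • C.pos v := by
        refine Finset.sum_congr rfl fun v _ => ?_
        rw [toPrevFun, Finset.sum_smul]

lemma toPrevFun_update (y : C.bary.VV → ℝ) (M : C.bary.VV) (v : C.VV) :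
    C.toPrevFun (Function.update y M 0) v = C.toPrevFun y v - y M * wt M.1 v := by
  unfold toPrevFun
  have h : ∀ u : C.bary.VV, (Function.update y M 0) u * wt u.1 v
      = y u * wt u.1 v - (if u = M then y M * wt M.1 v else 0) := by
    intro u
    rcases eq_or_ne u M with rfl | h
    · simp
    · rw [Function.update_of_ne h, if_neg h, sub_zero]
  rw [Finset.sum_congr rfl fun u _ => h u, Finset.sum_sub_distrib,
    Finset.sum_ite_eq' Finset.univ M, if_pos (Finset.mem_univ M)]

lemma fsupp_update (y : C.bary.VV → ℝ) (M : C.bary.VV) :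
    fsupp (Function.update y M 0) = (fsupp y).erase M := by
  ext u
  rw [mem_fsupp, Finset.mem_erase, mem_fsupp]
  rcases eq_or_ne u M with rfl | h
  · simp
  · rw [Function.update_of_ne h]
    tauto

lemma toPrevFun_lower {y : C.bary.VV → ℝ} (hy : ∀ u, 0 ≤ y u) {M : C.bary.VV} {v : C.VV}
    (hv : v ∈ M.1) : y M * (M.1.card : ℝ)⁻¹ ≤ C.toPrevFun y v := by
  have : y M * (M.1.card : ℝ)⁻¹ = y M * wt M.1 v := by rw [wt, if_pos hv]
  rw [this]
  exact Finset.single_le_sum (fun u' _ => mul_nonneg (hy u') (wt_nonneg _ _)) (Finset.mem_univ M)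

lemma toPrevFun_exact {y : C.bary.VV → ℝ}
    (hflag : ∀ s ∈ fsupp y, ∀ t ∈ fsupp y, s.1 ⊆ t.1 ∨ t.1 ⊆ s.1)
    {M : C.bary.VV} (hM : M ∈ fsupp y) (hMtop : ∀ u ∈ fsupp y, u.1 ⊆ M.1) :
    ∃ v ∈ M.1, C.toPrevFun y v = y M * (M.1.card : ℝ)⁻¹ := by
  have key : ∃ v ∈ M.1, ∀ u : C.bary.VV, u ∈ fsupp y → u ≠ M → v ∉ u.1 := by
    by_cases h2 : ((fsupp y).erase M).Nonempty
    · obtain ⟨M2, hM2, hM2top⟩ := C.exists_top h2 (fun s hs t ht =>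
        hflag s (Finset.mem_of_mem_erase hs) t (Finset.mem_of_mem_erase ht))
      have hM2ne : M2 ≠ M := (Finset.mem_erase.mp hM2).1
      have hssub : M2.1 ⊂ M.1 := by
        refine ⟨hMtop M2 (Finset.mem_of_mem_erase hM2), fun hsub => hM2ne (Subtype.ext ?_)⟩
        exact Finset.Subset.antisymm (hMtop M2 (Finset.mem_of_mem_erase hM2)) hsub
      obtain ⟨v, hvM, hvM2⟩ := Finset.exists_of_ssubset hssub
      refine ⟨v, hvM, fun u hu hune hvu => hvM2 ?_⟩
      exact hM2top u (Finset.mem_erase.mpr ⟨hune, hu⟩) hvu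
    · obtain ⟨v, hv⟩ := C.bary_vert_nonempty M
      refine ⟨v, hv, fun u hu hune _ => ?_⟩
      exact h2 ⟨u, Finset.mem_erase.mpr ⟨hune, hu⟩⟩
  obtain ⟨v, hvM, hvkey⟩ := key
  refine ⟨v, hvM, ?_⟩
  rw [toPrevFun, Finset.sum_eq_single M]
  · rw [wt, if_pos hvM]
  · intro u _ hune
    by_cases hyu : y u = 0
    · rw [hyu, zero_mul]
    · have : v ∉ u.1 := hvkey u (mem_fsupp.mpr hyu) hune
      rw [wt, if_neg this, mul_zero]
  · intro h; exact absurd (Finset.mem_univ M) h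

lemma toPrevFun_injAux : ∀ (N : ℕ) (x y : C.bary.VV → ℝ),
    (fsupp x).card + (fsupp y).card ≤ N →
    (∀ u, 0 ≤ x u) → (∀ u, 0 ≤ y u) →
    (∀ s ∈ fsupp x, ∀ t ∈ fsupp x, s.1 ⊆ t.1 ∨ t.1 ⊆ s.1) →
    (∀ s ∈ fsupp y, ∀ t ∈ fsupp y, s.1 ⊆ t.1 ∨ t.1 ⊆ s.1) →
    C.toPrevFun x = C.toPrevFun y → x = y := by
  intro N
  induction N with
  | zero =>
    intro x y hcard _ _ _ _ _
    have hx : fsupp x = ∅ := Finset.card_eq_zero.mp (by omega)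
    have hy : fsupp y = ∅ := Finset.card_eq_zero.mp (by omega)
    funext u
    have h1 : x u = 0 := by
      by_contra h; exact absurd (mem_fsupp.mpr h) (by rw [hx]; exact Finset.notMem_empty u)
    have h2 : y u = 0 := by
      by_contra h; exact absurd (mem_fsupp.mpr h) (by rw [hy]; exact Finset.notMem_empty u)
    rw [h1, h2]
  | succ n ih =>
    intro x y hcard hx hy hfx hfy heq
    by_cases hxe : (fsupp x).Nonempty
    · by_cases hye : (fsupp y).Nonempty
      · obtain ⟨Mx, hMx, hMxtop⟩ := C.exists_top hxe hfx
        obtain ⟨My, hMy, hMytop⟩ := C.exists_top hye hfy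
        have hMM : Mx = My := by
          refine Subtype.ext (Finset.ext fun v => ⟨fun hv => ?_, fun hv => ?_⟩)
          · have h1 : 0 < C.toPrevFun x v := C.toPrevFun_pos hx (mem_fsupp.mp hMx) hv
            rw [heq] at h1
            obtain ⟨u, hyu, hvu⟩ := C.toPrevFun_ne_zero h1.ne'
            exact hMytop u (mem_fsupp.mpr hyu) hvu
          · have h1 : 0 < C.toPrevFun y v := C.toPrevFun_pos hy (mem_fsupp.mp hMy) hv
            rw [← heq] at h1
            obtain ⟨u, hxu, hvu⟩ := C.toPrevFun_ne_zero h1.ne'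
            exact hMxtop u (mem_fsupp.mpr hxu) hvu
        subst hMM
        have hcardpos : (0:ℝ) < ((Mx.1.card : ℝ))⁻¹ := by
          have := Finset.card_pos.mpr (C.bary_vert_nonempty Mx)
          positivity
        have hcoeff : x Mx = y Mx := by
          obtain ⟨vx, hvxM, hvx⟩ := C.toPrevFun_exact hfx hMx hMxtop
          obtain ⟨vy, hvyM, hvy⟩ := C.toPrevFun_exact hfy hMy hMytop
          have h1 : y Mx * (Mx.1.card : ℝ)⁻¹ ≤ x Mx * (Mx.1.card : ℝ)⁻¹ := by
            rw [← hvx, heq]; exact C.toPrevFun_lower hy hvxM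
          have h2 : x Mx * (Mx.1.card : ℝ)⁻¹ ≤ y Mx * (Mx.1.card : ℝ)⁻¹ := by
            rw [← hvy, ← heq]; exact C.toPrevFun_lower hx hvyM
          exact le_antisymm (le_of_mul_le_mul_right h2 hcardpos)
            (le_of_mul_le_mul_right h1 hcardpos)
        have heq' : C.toPrevFun (Function.update x Mx 0)
            = C.toPrevFun (Function.update y Mx 0) := by
          funext v
          rw [C.toPrevFun_update, C.toPrevFun_update, heq, hcoeff]
        have hsx : fsupp (Function.update x Mx 0) = (fsupp x).erase Mx := C.fsupp_update x Mx
        have hsy : fsupp (Function.update y Mx 0) = (fsupp y).erase Mx := C.fsupp_update y Mx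
        have hMxy : Mx ∈ fsupp y := hMy
        have hcard' : (fsupp (Function.update x Mx 0)).card
            + (fsupp (Function.update y Mx 0)).card ≤ n := by
          rw [hsx, hsy, Finset.card_erase_of_mem hMx, Finset.card_erase_of_mem hMxy]
          have c1 : 1 ≤ (fsupp x).card := Finset.card_pos.mpr hxe
          have c2 : 1 ≤ (fsupp y).card := Finset.card_pos.mpr hye
          omega
        have hxup : ∀ u, 0 ≤ Function.update x Mx 0 u := by
          intro u; rcases eq_or_ne u Mx with rfl | h
          · simp
          · rw [Function.update_of_ne h]; exact hx u
        have hyup : ∀ u, 0 ≤ Function.update y Mx 0 u := by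
          intro u; rcases eq_or_ne u Mx with rfl | h
          · simp
          · rw [Function.update_of_ne h]; exact hy u
        have hfix : ∀ s ∈ fsupp (Function.update x Mx 0),
            ∀ t ∈ fsupp (Function.update x Mx 0), s.1 ⊆ t.1 ∨ t.1 ⊆ s.1 := by
          rw [hsx]; intro s hs t ht
          exact hfx s (Finset.mem_of_mem_erase hs) t (Finset.mem_of_mem_erase ht)
        have hfiy : ∀ s ∈ fsupp (Function.update y Mx 0),
            ∀ t ∈ fsupp (Function.update y Mx 0), s.1 ⊆ t.1 ∨ t.1 ⊆ s.1 := by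
          rw [hsy]; intro s hs t ht
          exact hfy s (Finset.mem_of_mem_erase hs) t (Finset.mem_of_mem_erase ht)
        have hres := ih (Function.update x Mx 0) (Function.update y Mx 0)
          hcard' hxup hyup hfix hfiy heq'
        funext u
        rcases eq_or_ne u Mx with rfl | h
        · exact hcoeff
        · have := congrFun hres u
          rwa [Function.update_of_ne h, Function.update_of_ne h] at this
      · exfalso
        obtain ⟨u, hu⟩ := hxe
        obtain ⟨v, hv⟩ := C.bary_vert_nonempty u
        have h1 : 0 < C.toPrevFun x v := C.toPrevFun_pos hx (mem_fsupp.mp hu) hv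
        have h2 : C.toPrevFun y v = 0 := by
          refine Finset.sum_eq_zero fun u' _ => ?_
          have : y u' = 0 := by
            by_contra h; exact hye ⟨u', mem_fsupp.mpr h⟩
          rw [this, zero_mul]
        rw [heq, h2] at h1
        exact lt_irrefl 0 h1
    · by_cases hye : (fsupp y).Nonempty
      · exfalso
        obtain ⟨u, hu⟩ := hye
        obtain ⟨v, hv⟩ := C.bary_vert_nonempty u
        have h1 : 0 < C.toPrevFun y v := C.toPrevFun_pos hy (mem_fsupp.mp hu) hv
        have h2 : C.toPrevFun x v = 0 := by
          refine Finset.sum_eq_zero fun u' _ => ?_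
          have : x u' = 0 := by
            by_contra h; exact hxe ⟨u', mem_fsupp.mpr h⟩
          rw [this, zero_mul]
        rw [← heq, h2] at h1
        exact lt_irrefl 0 h1
      · funext u
        have h1 : x u = 0 := by
          by_contra h; exact hxe ⟨u, mem_fsupp.mpr h⟩
        have h2 : y u = 0 := by
          by_contra h; exact hye ⟨u, mem_fsupp.mpr h⟩
        rw [h1, h2]

lemma flag_of_space {y : C.bary.VV → ℝ} (hy : y ∈ C.bary.K.space) :
    ∀ s ∈ fsupp y, ∀ t ∈ fsupp y, s.1 ⊆ t.1 ∨ t.1 ⊆ s.1 := by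
  obtain ⟨-, -, c, hc, hsupp⟩ := hy
  obtain ⟨-, hflag⟩ := C.bary_faces_iff.mp hc
  intro s hs t ht
  exact hflag s (hsupp s (mem_fsupp.mp hs)) t (hsupp t (mem_fsupp.mp ht))

lemma toPrev_injective : Function.Injective C.toPrev := by
  intro x y h
  have heq : C.toPrevFun x.1 = C.toPrevFun y.1 := congrArg Subtype.val h
  exact Subtype.ext (C.toPrevFun_injAux ((fsupp x.1).card + (fsupp y.1).card) x.1 y.1
    le_rfl x.2.1 y.2.1 (C.flag_of_space x.2) (C.flag_of_space y.2) heq)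

lemma toPrev_surjAux : ∀ (N : ℕ) (w : C.VV → ℝ),
    (fsupp w).card ≤ N → (∀ v, 0 ≤ w v) →
    ((fsupp w).Nonempty → fsupp w ∈ C.K.faces) →
    ∃ y : C.bary.VV → ℝ, (∀ u, 0 ≤ y u) ∧ (∀ u ∈ fsupp y, u.1 ⊆ fsupp w) ∧
      (∀ s ∈ fsupp y, ∀ t ∈ fsupp y, s.1 ⊆ t.1 ∨ t.1 ⊆ s.1) ∧
      C.toPrevFun y = w := by
  intro N
  induction N with
  | zero =>
    intro w hcard _ _
    have hw : fsupp w = ∅ := Finset.card_eq_zero.mp (by omega)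
    refine ⟨0, fun u => le_rfl, by simp [fsupp], by simp [fsupp], ?_⟩
    funext v
    have h1 : w v = 0 := by
      by_contra h; exact absurd (mem_fsupp.mpr h) (by rw [hw]; exact Finset.notMem_empty v)
    rw [h1]
    exact Finset.sum_eq_zero fun u _ => by rw [Pi.zero_apply, zero_mul]
  | succ n ih =>
    intro w hcard hw hface
    by_cases hwe : (fsupp w).Nonempty
    · set t : Finset C.VV := fsupp w with ht
      have htfaces : t ∈ C.K.faces := hface hwe
      obtain ⟨v0, hv0t, hv0min⟩ := t.exists_min_image w hwe
      have ha : 0 < w v0 := lt_of_le_of_ne (hw v0) (Ne.symm (mem_fsupp.mp hv0t))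
      set w' : C.VV → ℝ := fun v => w v - (if v ∈ t then w v0 else 0) with hw'
      have hw'0 : ∀ v, 0 ≤ w' v := by
        intro v
        by_cases hv : v ∈ t
        · simp only [hw', if_pos hv]; linarith [hv0min v hv]
        · simp only [hw', if_neg hv, sub_zero]; exact hw v
      have hsub : fsupp w' ⊆ t.erase v0 := by
        intro v hv
        rw [mem_fsupp] at hv
        by_cases hvt : v ∈ t
        · refine Finset.mem_erase.mpr ⟨fun hvv => hv ?_, hvt⟩
          rw [hvv]; simp [hw', if_pos hv0t]
        · exfalso
          have : w v = 0 := by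
            by_contra h; exact hvt (mem_fsupp.mpr h)
          simp [hw', if_neg hvt, this] at hv
      have hcard' : (fsupp w').card ≤ n := by
        have h1 := Finset.card_le_card hsub
        have h2 := Finset.card_erase_of_mem hv0t
        have h3 : 1 ≤ t.card := Finset.card_pos.mpr hwe
        omega
      have hface' : (fsupp w').Nonempty → fsupp w' ∈ C.K.faces := by
        intro hne
        exact C.K.down_closed t htfaces _ (hsub.trans (Finset.erase_subset _ _)) hne
      obtain ⟨y', hy'0, hy'sub, hy'flag, hy'eq⟩ := ih w' hcard' hw'0 hface'
      set ut : C.bary.VV := ⟨t, htfaces⟩ with hut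
      have hy'ut : y' ut = 0 := by
        by_contra h
        have := hy'sub ut (mem_fsupp.mpr h)
        have hvmem : v0 ∈ fsupp w' := this hv0t
        exact (Finset.mem_erase.mp (hsub hvmem)).1 rfl
      set y : C.bary.VV → ℝ := Function.update y' ut (w v0 * t.card) with hy
      have hcardt : (0:ℝ) < (t.card : ℝ) := by exact_mod_cast Finset.card_pos.mpr hwe
      refine ⟨y, ?_, ?_, ?_, ?_⟩
      · intro u
        rcases eq_or_ne u ut with rfl | h
        · rw [hy, Function.update_self]; positivity
        · rw [hy, Function.update_of_ne h]; exact hy'0 u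
      · intro u hu
        rcases eq_or_ne u ut with rfl | h
        · exact Finset.Subset.refl t
        · rw [mem_fsupp, hy, Function.update_of_ne h] at hu
          exact (hy'sub u (mem_fsupp.mpr hu)).trans (hsub.trans (Finset.erase_subset _ _))
      · intro s hs u hu
        have hmem : ∀ z, z ∈ fsupp y → z = ut ∨ z ∈ fsupp y' := by
          intro z hz
          rcases eq_or_ne z ut with rfl | h
          · exact Or.inl rfl
          · rw [mem_fsupp, hy, Function.update_of_ne h] at hz
            exact Or.inr (mem_fsupp.mpr hz)
        have hsubt : ∀ z, z ∈ fsupp y' → z.1 ⊆ t :=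
          fun z hz => (hy'sub z hz).trans (hsub.trans (Finset.erase_subset _ _))
        rcases hmem s hs with rfl | hs' <;> rcases hmem u hu with rfl | hu'
        · exact Or.inl (Finset.Subset.refl _)
        · exact Or.inr (hsubt u hu')
        · exact Or.inl (hsubt s hs')
        · exact hy'flag s hs' u hu'
      · funext v
        have hupdate : C.toPrevFun y v = C.toPrevFun y' v
            - y' ut * wt t v + (w v0 * t.card) * wt t v := by
          have h1 : y = Function.update y' ut (w v0 * t.card) := hy
          rw [h1]
          have h2 : ∀ u : C.bary.VV, (Function.update y' ut (w v0 * t.card)) u * wt u.1 v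
              = y' u * wt u.1 v + (if u = ut then ((w v0 * t.card) - y' ut) * wt t v else 0) := by
            intro u
            rcases eq_or_ne u ut with rfl | h
            · rw [Function.update_self, if_pos rfl]; ring
            · rw [Function.update_of_ne h, if_neg h, add_zero]
          rw [toPrevFun, Finset.sum_congr rfl fun u _ => h2 u, Finset.sum_add_distrib,
            Finset.sum_ite_eq' Finset.univ ut, if_pos (Finset.mem_univ ut)]
          show C.toPrevFun y' v + _ = _
          ring
        rw [hupdate, hy'ut, hy'eq]
        by_cases hv : v ∈ t
        · have hwt : wt t v = (t.card : ℝ)⁻¹ := if_pos hv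
          have : w v0 * (t.card : ℝ) * (t.card : ℝ)⁻¹ = w v0 := by
            field_simp
          rw [hwt, this]
          simp [hw', if_pos hv]
        · have hwt : wt t v = 0 := if_neg hv
          rw [hwt]
          simp [hw', if_neg hv]
    · refine ⟨0, fun u => le_rfl, by simp [fsupp], by simp [fsupp], ?_⟩
      funext v
      have h1 : w v = 0 := by
        by_contra h; exact hwe ⟨v, mem_fsupp.mpr h⟩
      rw [h1]
      exact Finset.sum_eq_zero fun u _ => by rw [Pi.zero_apply, zero_mul]

lemma toPrev_surjective : Function.Surjective C.toPrev := by
  intro z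
  have hsum : ∑ v, z.1 v = 1 := z.2.2.1
  have hsupp : (fsupp z.1).Nonempty → fsupp z.1 ∈ C.K.faces := by
    intro hne
    obtain ⟨-, -, s, hs, hsub⟩ := z.2
    exact C.K.down_closed s hs _ (fun v hv => hsub v (mem_fsupp.mp hv)) hne
  obtain ⟨y, hy0, -, hyflag, hyeq⟩ := C.toPrev_surjAux (fsupp z.1).card z.1 le_rfl z.2.1 hsupp
  have hysum : ∑ u, y u = 1 := by rw [← C.sum_toPrevFun, hyeq]; exact hsum
  have hyne : (fsupp y).Nonempty := by
    by_contra h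
    have : ∀ u, y u = 0 := by
      intro u; by_contra h'; exact h ⟨u, mem_fsupp.mpr h'⟩
    rw [Finset.sum_eq_zero fun u _ => this u] at hysum
    exact one_ne_zero hysum.symm
  have hyface : fsupp y ∈ C.bary.K.faces := C.bary_faces_iff.mpr ⟨hyne, hyflag⟩
  have hymem : y ∈ C.bary.K.space :=
    ⟨hy0, hysum, fsupp y, hyface, fun u hu => mem_fsupp.mpr hu⟩
  exact ⟨⟨y, hymem⟩, Subtype.ext (by show C.toPrevFun y = z.1; rw [hyeq])⟩

lemma bary_geomMap_inj (h : Function.Injective C.geomMap) :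
    Function.Injective C.bary.geomMap := by
  intro x y hxy
  rw [C.geomMap_bary_eq, C.geomMap_bary_eq] at hxy
  exact C.toPrev_injective (h hxy)

lemma bary_geomMap_range : Set.range C.bary.geomMap = Set.range C.geomMap := by
  have h : C.bary.geomMap = C.geomMap ∘ C.toPrev := funext fun x => C.geomMap_bary_eq x
  rw [h, Set.range_comp, C.toPrev_surjective.range_eq, Set.image_univ]

lemma dimLE_bary {n : ℕ} (h : C.K.dimLE n) : C.bary.K.dimLE n := by
  intro c hc
  obtain ⟨-, hflag⟩ := C.bary_faces_iff.mp hc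
  have hinj : Set.InjOn (fun u : C.bary.VV => u.1.card) c := by
    intro u hu u' hu' huu
    rcases hflag u hu u' hu' with hs | hs
    · exact Subtype.ext (Finset.eq_of_subset_of_card_le hs (le_of_eq huu.symm))
    · exact Subtype.ext (Finset.eq_of_subset_of_card_le hs (le_of_eq huu)).symm
  have himg : c.image (fun u : C.bary.VV => u.1.card) ⊆ Finset.Icc 1 (n+1) := by
    intro k hk
    obtain ⟨u, hu, rfl⟩ := Finset.mem_image.mp hk
    exact Finset.mem_Icc.mpr ⟨Finset.card_pos.mpr (C.bary_vert_nonempty u), h u.1 u.2⟩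
  calc c.card = (c.image fun u : C.bary.VV => u.1.card).card :=
        (Finset.card_image_of_injOn hinj).symm
    _ ≤ (Finset.Icc 1 (n+1)).card := Finset.card_le_card himg
    _ = n + 1 := by rw [Nat.card_Icc]; omega

end RealizedComplex

namespace RealizedComplex

section Normed

variable {E : Type*} [NormedAddCommGroup E] [NormedSpace ℝ E] (C : RealizedComplex E)

/-- All simplices of `C` have diameter at most `M`. -/
def MeshLE (M : ℝ) : Prop :=
  ∀ s ∈ C.K.faces, ∀ v ∈ s, ∀ w ∈ s, ‖C.pos v - C.pos w‖ ≤ M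

lemma dist_bary_pos {M : ℝ} (hM : C.MeshLE M) (u : C.bary.VV) {s0 : Finset C.VV}
    (hs0 : s0 ∈ C.K.faces) (hcomp : u.1 ⊆ s0 ∨ s0 ⊆ u.1) {v0 : C.VV} (hv0 : v0 ∈ s0) :
    ‖C.bary.pos u - C.pos v0‖ ≤ M := by
  have hne := C.bary_vert_nonempty u
  have hc : (0:ℝ) < (u.1.card : ℝ) := by exact_mod_cast Finset.card_pos.mpr hne
  have key : C.bary.pos u - C.pos v0 = (u.1.card:ℝ)⁻¹ • ∑ v ∈ u.1, (C.pos v - C.pos v0) := by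
    show (u.1.card : ℝ)⁻¹ • ∑ v ∈ u.1, C.pos v - C.pos v0 = _
    rw [Finset.sum_sub_distrib, smul_sub, Finset.sum_const, ← Nat.cast_smul_eq_nsmul ℝ,
      smul_smul, inv_mul_cancel₀ hc.ne', one_smul]
  rw [key, norm_smul, norm_inv, Real.norm_natCast]
  have hterm : ∀ v ∈ u.1, ‖C.pos v - C.pos v0‖ ≤ M := by
    intro v hv
    rcases hcomp with h | h
    · exact hM s0 hs0 v (h hv) v0 hv0
    · exact hM u.1 u.2 v hv v0 (h hv0)
  calc ((u.1.card:ℝ))⁻¹ * ‖∑ v ∈ u.1, (C.pos v - C.pos v0)‖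
      ≤ (u.1.card:ℝ)⁻¹ * (u.1.card * M) := by
        refine mul_le_mul_of_nonneg_left ?_ (by positivity)
        calc ‖∑ v ∈ u.1, (C.pos v - C.pos v0)‖ ≤ ∑ v ∈ u.1, ‖C.pos v - C.pos v0‖ :=
              norm_sum_le _ _
          _ ≤ ∑ _v ∈ u.1, M := Finset.sum_le_sum hterm
          _ = u.1.card * M := by rw [Finset.sum_const, nsmul_eq_mul]
    _ = M := by field_simp
  done

lemma ratio_le {c n : ℕ} (hc1 : 1 ≤ c) (hcn : c ≤ n + 1) :
    ((c:ℝ) - 1) / c ≤ (n:ℝ) / (n + 1) := by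
  have h1 : (0:ℝ) < c := by exact_mod_cast hc1
  have h2 : (0:ℝ) < (n:ℝ) + 1 := by positivity
  rw [div_le_div_iff₀ h1 h2]
  have : (c:ℝ) ≤ (n:ℝ) + 1 := by exact_mod_cast hcn
  nlinarith

lemma mesh_bary {n : ℕ} (hdim : C.K.dimLE n) {M : ℝ} (hM : C.MeshLE M) (hM0 : 0 ≤ M) :
    C.bary.MeshLE (((n:ℝ) / (n + 1)) * M) := by
  have aux : ∀ a b : C.bary.VV, b.1 ⊆ a.1 →
      ‖C.bary.pos b - C.bary.pos a‖ ≤ ((n:ℝ) / (n + 1)) * M := by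
    intro a b hba
    have hbne := C.bary_vert_nonempty b
    have hcb : (0:ℝ) < (b.1.card : ℝ) := by exact_mod_cast Finset.card_pos.mpr hbne
    have hane := C.bary_vert_nonempty a
    have hca : (0:ℝ) < (a.1.card : ℝ) := by exact_mod_cast Finset.card_pos.mpr hane
    have key : C.bary.pos b - C.bary.pos a
        = (b.1.card:ℝ)⁻¹ • ∑ w ∈ b.1, (C.pos w - C.bary.pos a) := by
      show (b.1.card : ℝ)⁻¹ • ∑ w ∈ b.1, C.pos w - C.bary.pos a = _
      rw [Finset.sum_sub_distrib, smul_sub, Finset.sum_const, ← Nat.cast_smul_eq_nsmul ℝ,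
        smul_smul, inv_mul_cancel₀ hcb.ne', one_smul]
    have hterm : ∀ w ∈ b.1, ‖C.pos w - C.bary.pos a‖ ≤ ((n:ℝ) / (n + 1)) * M := by
      intro w hw
      have hwa : w ∈ a.1 := hba hw
      have key2 : C.pos w - C.bary.pos a
          = (a.1.card:ℝ)⁻¹ • ∑ v ∈ a.1, (C.pos w - C.pos v) := by
        have h1 : ∑ v ∈ a.1, (C.pos w - C.pos v)
            = a.1.card • C.pos w - ∑ v ∈ a.1, C.pos v := by
          rw [Finset.sum_sub_distrib, Finset.sum_const]
        show C.pos w - (a.1.card : ℝ)⁻¹ • ∑ v ∈ a.1, C.pos v = _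
        rw [h1, smul_sub, ← Nat.cast_smul_eq_nsmul ℝ, smul_smul, inv_mul_cancel₀ hca.ne',
          one_smul]
      rw [key2, norm_smul, norm_inv, Real.norm_natCast]
      have hsum : ‖∑ v ∈ a.1, (C.pos w - C.pos v)‖ ≤ ((a.1.card:ℝ) - 1) * M := by
        calc ‖∑ v ∈ a.1, (C.pos w - C.pos v)‖ ≤ ∑ v ∈ a.1, ‖C.pos w - C.pos v‖ :=
              norm_sum_le _ _
          _ = ∑ v ∈ a.1.erase w, ‖C.pos w - C.pos v‖ := by
              rw [← Finset.sum_erase_add _ _ hwa]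
              simp
          _ ≤ ∑ _v ∈ a.1.erase w, M :=
              Finset.sum_le_sum fun v hv =>
                hM a.1 a.2 w hwa v (Finset.mem_of_mem_erase hv)
          _ = ((a.1.card:ℝ) - 1) * M := by
              rw [Finset.sum_const, nsmul_eq_mul, Finset.card_erase_of_mem hwa]
              have h1 : 1 ≤ a.1.card := Finset.card_pos.mpr hane
              push_cast [Nat.cast_sub h1]
              ring
      calc ((a.1.card:ℝ))⁻¹ * ‖∑ v ∈ a.1, (C.pos w - C.pos v)‖
          ≤ (a.1.card:ℝ)⁻¹ * (((a.1.card:ℝ) - 1) * M) :=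
            mul_le_mul_of_nonneg_left hsum (by positivity)
        _ = (((a.1.card:ℝ) - 1) / a.1.card) * M := by ring
        _ ≤ ((n:ℝ) / (n + 1)) * M := by
            refine mul_le_mul_of_nonneg_right ?_ hM0
            exact ratio_le (Finset.card_pos.mpr hane) (hdim a.1 a.2)
    rw [key, norm_smul, norm_inv, Real.norm_natCast]
    calc ((b.1.card:ℝ))⁻¹ * ‖∑ w ∈ b.1, (C.pos w - C.bary.pos a)‖
        ≤ (b.1.card:ℝ)⁻¹ * (b.1.card * (((n:ℝ) / (n + 1)) * M)) := by
          refine mul_le_mul_of_nonneg_left ?_ (by positivity)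
          calc ‖∑ w ∈ b.1, (C.pos w - C.bary.pos a)‖
              ≤ ∑ w ∈ b.1, ‖C.pos w - C.bary.pos a‖ := norm_sum_le _ _
            _ ≤ ∑ _w ∈ b.1, ((n:ℝ) / (n + 1)) * M := Finset.sum_le_sum hterm
            _ = b.1.card * (((n:ℝ) / (n + 1)) * M) := by
                rw [Finset.sum_const, nsmul_eq_mul]
      _ = ((n:ℝ) / (n + 1)) * M := by field_simp
  intro c hc u hu u' hu'
  obtain ⟨-, hflag⟩ := C.bary_faces_iff.mp hc
  rcases hflag u hu u' hu' with h | h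
  · exact aux u' u h
  · rw [norm_sub_rev]; exact aux u u' h

end Normed

end RealizedComplex

namespace FinSimpComplex

variable {V : Type} [Fintype V] [DecidableEq V] (K : FinSimpComplex V)

lemma dimLE_dim : K.dimLE K.dim := by
  intro s hs
  have h1 : s.card - 1 ≤ K.dim := Finset.le_sup (f := fun s : Finset V => s.card - 1) hs
  have h2 := Finset.card_pos.mpr (K.nonempty_of_mem s hs)
  show s.card ≤ K.dim + 1
  omega

lemma toRealized_geomMap (x : ↥K.toRealized.K.space) :
    K.toRealized.geomMap x = x.1 := by
  funext w
  show (∑ v : V, x.1 v • K.toRealized.pos v) w = x.1 w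
  rw [Finset.sum_apply]
  have : ∀ v : V, (x.1 v • K.toRealized.pos v) w = if v = w then x.1 v else 0 := by
    intro v
    show x.1 v * (if v = w then (1:ℝ) else 0) = _
    split <;> simp
  rw [Finset.sum_congr rfl fun v _ => this v]
  exact (Finset.sum_ite_eq' Finset.univ w _).trans (if_pos (Finset.mem_univ w))

lemma iter_dimLE (j : ℕ) : (K.toRealized.iterBary j).K.dimLE K.dim := by
  induction j with
  | zero => exact K.dimLE_dim
  | succ n ih => exact RealizedComplex.dimLE_bary _ ih

lemma iter_inj_range (j : ℕ) :
    Function.Injective (K.toRealized.iterBary j).geomMap ∧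
    Set.range (K.toRealized.iterBary j).geomMap = K.space := by
  induction j with
  | zero =>
    constructor
    · intro x y h
      have h' : K.toRealized.geomMap x = K.toRealized.geomMap y := h
      replace h' := (K.toRealized_geomMap x).symm.trans (h'.trans (K.toRealized_geomMap y))
      exact Subtype.ext h'
    · have h0 : (K.toRealized.iterBary 0).geomMap = Subtype.val :=
        funext fun x => K.toRealized_geomMap x
      rw [h0]
      exact Subtype.range_coe
  | succ n ih =>
    refine ⟨RealizedComplex.bary_geomMap_inj _ ih.1, ?_⟩
    have h1 : Set.range (K.toRealized.iterBary (n+1)).geomMap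
        = Set.range (K.toRealized.iterBary n).geomMap :=
      RealizedComplex.bary_geomMap_range _
    rw [h1]
    exact ih.2

lemma toRealized_meshLE : K.toRealized.MeshLE 2 := by
  intro s _ v _ w _
  have hb : ∀ a : V, ‖K.toRealized.pos a‖ ≤ 1 := by
    intro a
    rw [pi_norm_le_iff_of_nonneg zero_le_one]
    intro i
    show ‖if a = i then (1:ℝ) else 0‖ ≤ 1
    split <;> simp
  calc ‖K.toRealized.pos v - K.toRealized.pos w‖
      ≤ ‖K.toRealized.pos v‖ + ‖K.toRealized.pos w‖ := norm_sub_le _ _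
    _ ≤ 2 := by linarith [hb v, hb w]

lemma iter_meshLE (j : ℕ) :
    (K.toRealized.iterBary j).MeshLE (((K.dim:ℝ) / (K.dim + 1))^j * 2) := by
  induction j with
  | zero => rw [pow_zero, one_mul]; exact K.toRealized_meshLE
  | succ n ih =>
    have h := RealizedComplex.mesh_bary _ (K.iter_dimLE n) ih (by positivity)
    have : ((K.dim:ℝ) / (K.dim + 1)) * (((K.dim:ℝ) / (K.dim + 1))^n * 2)
        = ((K.dim:ℝ) / (K.dim + 1))^(n+1) * 2 := by ring
    rwa [this] at h

end FinSimpComplex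


namespace RealizedComplex

variable {E : Type*} [NormedAddCommGroup E] [NormedSpace ℝ E] (C : RealizedComplex E)

lemma continuous_geomMap : Continuous fun x : ↥C.K.space => C.geomMap x := by
  unfold RealizedComplex.geomMap
  refine continuous_finset_sum _ fun v _ => ?_
  exact ((continuous_apply v).comp continuous_subtype_val).smul continuous_const

lemma geomMap_close {M : ℝ} (hM : C.MeshLE M) (y : ↥C.bary.K.space)
    {u0 : C.bary.VV} (hy0 : y.1 u0 ≠ 0) {v0 : C.VV} (hv0 : v0 ∈ u0.1) :
    ‖C.bary.geomMap y - C.pos v0‖ ≤ M := by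
  obtain ⟨hnn, hsum, c, hc, hsupp⟩ := y.2
  obtain ⟨-, hflag⟩ := C.bary_faces_iff.mp hc
  have hkey : C.bary.geomMap y - C.pos v0 = ∑ u : C.bary.VV, y.1 u • (C.bary.pos u - C.pos v0) := by
    show (∑ u : C.bary.VV, y.1 u • C.bary.pos u) - C.pos v0 = _
    have h1 : ∀ u ∈ Finset.univ (α := C.bary.VV), y.1 u • (C.bary.pos u - C.pos v0)
        = y.1 u • C.bary.pos u - y.1 u • C.pos v0 := fun u _ => smul_sub _ _ _
    rw [Finset.sum_congr rfl h1, Finset.sum_sub_distrib, ← Finset.sum_smul, hsum, one_smul]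
  rw [hkey]
  have hb : ∀ u : C.bary.VV, ‖y.1 u • (C.bary.pos u - C.pos v0)‖ ≤ y.1 u * M := by
    intro u
    rw [norm_smul, Real.norm_eq_abs, abs_of_nonneg (hnn u)]
    by_cases hyu : y.1 u = 0
    · rw [hyu, zero_mul, zero_mul]
    · refine mul_le_mul_of_nonneg_left ?_ (hnn u)
      exact C.dist_bary_pos hM u u0.2 (hflag u (hsupp u hyu) u0 (hsupp u0 hy0)) hv0
  calc ‖∑ u : C.bary.VV, y.1 u • (C.bary.pos u - C.pos v0)‖
      ≤ ∑ u : C.bary.VV, ‖y.1 u • (C.bary.pos u - C.pos v0)‖ := norm_sum_le _ _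
    _ ≤ ∑ u : C.bary.VV, y.1 u * M := Finset.sum_le_sum fun u _ => hb u
    _ = M := by rw [← Finset.sum_mul, hsum, one_mul]

lemma flag_color_card {m n : ℕ} {c : Finset C.bary.VV}
    (hflag : ∀ s ∈ c, ∀ t ∈ c, s.1 ⊆ t.1 ∨ t.1 ⊆ s.1)
    (hdim : ∀ u ∈ c, u.1.card ≤ n + 1) {r : ℕ}
    (hcol : ∀ u ∈ c, (u.1.card - 1) % m = r) : c.card ≤ n / m + 1 := by
  have key : ∀ x y : C.bary.VV, x ∈ c → y ∈ c → x.1 ⊆ y.1 →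
      (x.1.card - 1) / m = (y.1.card - 1) / m → x = y := by
    intro x y hx hy hsub hdiv
    have h1 : x.1.card - 1 = y.1.card - 1 := by
      have hmx := hcol x hx
      have hmy := hcol y hy
      have e1 := Nat.div_add_mod (x.1.card - 1) m
      have e2 := Nat.div_add_mod (y.1.card - 1) m
      rw [hdiv, hmx] at e1
      rw [hmy] at e2
      omega
    have hcx : 1 ≤ x.1.card := Finset.card_pos.mpr (C.bary_vert_nonempty x)
    have hcy : 1 ≤ y.1.card := Finset.card_pos.mpr (C.bary_vert_nonempty y)
    have : y.1.card ≤ x.1.card := by omega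
    exact Subtype.ext (Finset.eq_of_subset_of_card_le hsub this)
  have hinj : Set.InjOn (fun u : C.bary.VV => (u.1.card - 1) / m) c := by
    intro x hx y hy h
    rcases hflag x hx y hy with hs | hs
    · exact key x y hx hy hs h
    · exact (key y x hy hx hs h.symm).symm
  have himg : c.image (fun u : C.bary.VV => (u.1.card - 1) / m) ⊆ Finset.range (n / m + 1) := by
    intro a ha
    obtain ⟨u, hu, rfl⟩ := Finset.mem_image.mp ha
    rw [Finset.mem_range, Nat.lt_succ_iff]
    exact Nat.div_le_div_right (by have := hdim u hu; omega)
  calc c.card = (c.image fun u : C.bary.VV => (u.1.card - 1) / m).card :=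
        (Finset.card_image_of_injOn hinj).symm
    _ ≤ (Finset.range (n / m + 1)).card := Finset.card_le_card himg
    _ = n / m + 1 := Finset.card_range _

end RealizedComplex

namespace FinSimpComplex

variable {V : Type} [Fintype V] [DecidableEq V] (K : FinSimpComplex V)

lemma space_isClosed : IsClosed K.space := by
  have h : K.space = ({x : V → ℝ | ∀ v, 0 ≤ x v} ∩ {x : V → ℝ | ∑ v, x v = 1}) ∩
      (⋃ s ∈ K.faces, {x : V → ℝ | ∀ v ∉ s, x v = 0}) := by
    ext x
    simp only [space, Set.mem_inter_iff, Set.mem_setOf_eq, Set.mem_iUnion, exists_prop]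
    constructor
    · rintro ⟨h1, h2, s, hs, h3⟩
      exact ⟨⟨h1, h2⟩, s, hs, fun v hv => by_contra fun h => hv (h3 v h)⟩
    · rintro ⟨⟨h1, h2⟩, s, hs, h3⟩
      exact ⟨h1, h2, s, hs, fun v hv => by_contra fun h => hv (h3 v h)⟩
  rw [h]
  have c1 : IsClosed {x : V → ℝ | ∀ v, 0 ≤ x v} := by
    have : {x : V → ℝ | ∀ v, 0 ≤ x v} = ⋂ v, {x : V → ℝ | 0 ≤ x v} := by ext; simp
    rw [this]
    exact isClosed_iInter fun v => isClosed_le continuous_const (continuous_apply v)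
  have c2 : IsClosed {x : V → ℝ | ∑ v, x v = 1} :=
    isClosed_eq (continuous_finset_sum _ fun v _ => continuous_apply v) continuous_const
  have c3 : ∀ s : Finset V, IsClosed {x : V → ℝ | ∀ v ∉ s, x v = 0} := by
    intro s
    have : {x : V → ℝ | ∀ v ∉ s, x v = 0}
        = ⋂ (v) (_ : v ∉ s), {x : V → ℝ | x v = 0} := by ext; simp
    rw [this]
    exact isClosed_iInter fun v => isClosed_iInter fun _ =>
      isClosed_eq (continuous_apply v) continuous_const
  exact ((c1.inter c2).inter
    (Set.Finite.isClosed_biUnion (K.faces.finite_toSet) fun s _ => c3 s))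

lemma space_isCompact : IsCompact K.space := by
  refine IsCompact.of_isClosed_subset (isCompact_Icc (a := (0 : V → ℝ)) (b := 1))
    K.space_isClosed ?_
  intro x hx
  rw [Set.mem_Icc]
  refine ⟨fun v => hx.1 v, fun v => ?_⟩
  show x v ≤ 1
  rw [← hx.2.1]
  exact Finset.single_le_sum (fun w _ => hx.1 w) (Finset.mem_univ v)

lemma exists_delta (d : ↥K.space → ↥K.space → ℝ) (hd : IsCompatibleMetric d)
    {ε : ℝ} (hε : 0 < ε) :
    ∃ δ > 0, ∀ x y : ↥K.space, dist x.1 y.1 < δ → d x y < ε := by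
  obtain ⟨mK, hTop, hDist⟩ := hd
  have hcomp : CompactSpace ↥K.space := isCompact_iff_compactSpace.mp K.space_isCompact
  have hcont : @Continuous ↥K.space ↥K.space _ mK.toUniformSpace.toTopologicalSpace id := by
    rw [hTop]
    exact continuous_id
  have hUC : @UniformContinuous ↥K.space ↥K.space PseudoMetricSpace.toUniformSpace
      mK.toUniformSpace id :=
    @CompactSpace.uniformContinuous_of_continuous ↥K.space ↥K.space
      PseudoMetricSpace.toUniformSpace mK.toUniformSpace hcomp id hcont
  rw [@Metric.uniformContinuous_iff ↥K.space ↥K.space _ mK.toPseudoMetricSpace] at hUC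
  obtain ⟨δ, hδ, hδ'⟩ := hUC ε hε
  refine ⟨δ, hδ, fun x y h => ?_⟩
  have h1 : dist x y < δ := by rwa [Subtype.dist_eq]
  have := hδ' h1
  rwa [hDist] at this

end FinSimpComplex

/-- Transport of a complex along an equivalence of vertex types. -/
noncomputable def FinSimpComplex.mapEquiv_s7 {V W : Type} [Fintype V] [DecidableEq V]
    [Fintype W] [DecidableEq W] (e : V ≃ W) (K : FinSimpComplex V) : FinSimpComplex W where
  faces := K.faces.image (Finset.image e)
  nonempty_of_mem s hs := by
    obtain ⟨t, ht, rfl⟩ := Finset.mem_image.mp hs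
    exact (K.nonempty_of_mem t ht).image e
  down_closed s hs t hts htne := by
    obtain ⟨s', hs', rfl⟩ := Finset.mem_image.mp hs
    refine Finset.mem_image.mpr ⟨t.image e.symm, K.down_closed s' hs' _ ?_ (htne.image _), ?_⟩
    · intro v hv
      obtain ⟨w, hw, rfl⟩ := Finset.mem_image.mp hv
      obtain ⟨v', hv', hvv⟩ := Finset.mem_image.mp (hts hw)
      rw [← hvv]
      simpa using hv'
    · rw [Finset.image_image]
      have : (⇑e ∘ ⇑e.symm) = id := by
        funext w; simp
      rw [this, Finset.image_id]

lemma FinSimpComplex.mapEquiv_space_mem {V W : Type} [Fintype V] [DecidableEq V]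
    [Fintype W] [DecidableEq W] (e : V ≃ W) (K : FinSimpComplex V) {x : V → ℝ}
    (hx : x ∈ K.space) : (fun w => x (e.symm w)) ∈ (K.mapEquiv_s7 e).space := by
  refine ⟨fun w => hx.1 _, ?_, ?_⟩
  · rw [← hx.2.1]
    exact Equiv.sum_comp e.symm x
  · obtain ⟨s, hs, hsub⟩ := hx.2.2
    refine ⟨s.image e, Finset.mem_image.mpr ⟨s, hs, rfl⟩, fun w hw => ?_⟩
    exact Finset.mem_image.mpr ⟨e.symm w, hsub _ hw, by simp⟩

lemma FinSimpComplex.mapEquiv_dimLE {V W : Type} [Fintype V] [DecidableEq V]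
    [Fintype W] [DecidableEq W] (e : V ≃ W) (K : FinSimpComplex V) {n : ℕ}
    (h : K.dimLE n) : (K.mapEquiv_s7 e).dimLE n := by
  intro s hs
  obtain ⟨t, ht, rfl⟩ := Finset.mem_image.mp hs
  rw [Finset.card_image_of_injective _ e.injective]
  exact h t ht

lemma widim_le_of_embedding {X : Type*} [TopologicalSpace X] (d : X → X → ℝ) (ε : ℝ)
    (n k : ℕ) (L : FinSimpComplex (Fin k)) (hL : L.dimLE n) (f : X → ↥L.space)
    (hf : Continuous f) (hfib : ∀ p, diamOn d (f ⁻¹' {p}) < ENNReal.ofReal ε) :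
    widim X d ε ≤ (n : ℝ≥0∞) :=
  sInf_le ⟨n, rfl, k, L, f, hL, hf, hfib⟩

end GromovAux

/-- **Lemma 3.3 (second variation of Gromov's lemma).** Let `K` be a finite simplicial
complex with a metric `d`, let `ε > 0` and let `m ≥ 1`. Then after subdividing `K`
sufficiently fine (iterated barycentric subdivision `K̃`, whose underlying topological space
is identified with `K` via the canonical affine map, which is a bijection onto `|K|`), there
is a simplicial map `f : K̃ → Δ^{m-1}` such that `widim_ε(f⁻¹(p), d) ≤ (dim K)/m` for every
`p ∈ Δ^{m-1}`. -/
theorem gromov_lemma_subdivision {V : Type} [Fintype V] [DecidableEq V]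
    (K : FinSimpComplex V) (d : ↥K.space → ↥K.space → ℝ)
    (hd : IsCompatibleMetric d) (ε : ℝ) (hε : 0 < ε) {m : ℕ} (hm : 0 < m) :
    ∃ (j : ℕ) (φ : (K.toRealized.iterBary j).VV → Fin m),
      Function.Injective (K.toRealized.iterBary j).geomMap ∧
      Set.range (K.toRealized.iterBary j).geomMap = K.space ∧
      ∀ p : ↥(stdSimplex ℝ (Fin m)),
        widim
          ↥{x : ↥K.space | (x : V → ℝ) ∈
              (K.toRealized.iterBary j).geomMap ''
                (inducedMap (K.toRealized.iterBary j).K φ ⁻¹' {p})}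
          (fun a b => d a.1 b.1) ε ≤ (K.dim : ℝ≥0∞) / (m : ℝ≥0∞) := by
  classical
  obtain ⟨δ, hδ, hδd⟩ := K.exists_delta d hd (half_pos hε)
  have hr0 : (0:ℝ) ≤ (K.dim : ℝ) / (K.dim + 1) := by positivity
  have hr1 : (K.dim : ℝ) / (K.dim + 1) < 1 := by
    rw [div_lt_one (by positivity)]
    linarith
  obtain ⟨j', hj'⟩ := exists_pow_lt_of_lt_one (show (0:ℝ) < δ/4 by linarith) hr1
  set Cj := K.toRealized.iterBary j' with hCjdef
  have hmesh := K.iter_meshLE j'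
  set M : ℝ := ((K.dim:ℝ)/(K.dim+1))^j' * 2 with hMdef
  have hM0 : 0 ≤ M := by positivity
  have hM2 : 2 * M < δ := by
    have h4 : ((K.dim:ℝ)/(K.dim+1))^j' < δ/4 := hj'
    have h5 : 2 * M = 4 * ((K.dim:ℝ)/(K.dim+1))^j' := by rw [hMdef]; ring
    linarith
  obtain ⟨hinj, hrange⟩ := K.iter_inj_range (j' + 1)
  set φ : Cj.bary.VV → Fin m :=
    (fun u => ⟨(u.1.card - 1) % m, Nat.mod_lt _ hm⟩) with hφdef
  refine ⟨j' + 1, φ, hinj, hrange, ?_⟩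
  intro p
  -- choose a coordinate where p is positive
  obtain ⟨i0, hi0⟩ : ∃ i : Fin m, p.1 i ≠ 0 := by
    by_contra h
    push_neg at h
    have h0 : ∑ i, p.1 i = 0 := Finset.sum_eq_zero fun i _ => h i
    rw [p.2.2] at h0
    exact one_ne_zero h0
  have hp0 : 0 < p.1 i0 := lt_of_le_of_ne (p.2.1 i0) (Ne.symm hi0)
  -- homeomorphism between the subdivided space and |K|
  haveI hcomp : CompactSpace ↥Cj.bary.K.space :=
    isCompact_iff_compactSpace.mp (Cj.bary.K.space_isCompact)
  have hmemgeo : ∀ x : ↥Cj.bary.K.space, Cj.bary.geomMap x ∈ K.space := fun x => by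
    rw [← hrange]
    exact ⟨x, rfl⟩
  let eH : ↥Cj.bary.K.space ≃ ↥K.space := Equiv.ofBijective
      (fun x => ⟨Cj.bary.geomMap x, hmemgeo x⟩)
      ⟨fun a b h => hinj (congrArg Subtype.val h),
       fun z => by
         have hz : z.1 ∈ Set.range (K.toRealized.iterBary (j'+1)).geomMap := by
           rw [hrange]; exact z.2
         obtain ⟨x, hx⟩ := hz
         exact ⟨x, Subtype.ext hx⟩⟩
  have hceH : Continuous eH := by
    show Continuous fun x : ↥Cj.bary.K.space => (⟨Cj.bary.geomMap x, hmemgeo x⟩ : ↥K.space)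
    exact (Cj.bary.continuous_geomMap).subtype_mk _
  let H : ↥Cj.bary.K.space ≃ₜ ↥K.space := hceH.homeoOfEquivCompactToT2
  -- the fiber set
  set S : Set ↥K.space := {x : ↥K.space | (x : V → ℝ) ∈
      (K.toRealized.iterBary (j'+1)).geomMap ''
        (inducedMap (K.toRealized.iterBary (j'+1)).K φ ⁻¹' {p})} with hSdef
  show widim ↥S (fun a b => d a.1 b.1) ε ≤ (K.dim : ℝ≥0∞) / (m : ℝ≥0∞)
  -- target complex
  set kk := Fintype.card Cj.bary.VV with hkkdef
  set eqW : Cj.bary.VV ≃ Fin kk := Fintype.equivFin Cj.bary.VV with heqWdef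
  set A : Finset Cj.bary.VV := Finset.univ.filter (fun u => φ u = i0) with hAdef
  set L : FinSimpComplex Cj.bary.VV := Cj.bary.K.fullSub A with hLdef
  set Lf : FinSimpComplex (Fin kk) := L.mapEquiv_s7 eqW with hLfdef
  have hdimL : L.dimLE (K.dim / m) := by
    intro s hs
    obtain ⟨hsK, hsA⟩ := Finset.mem_filter.mp hs
    obtain ⟨-, hflag⟩ := Cj.bary_faces_iff.mp hsK
    refine Cj.flag_color_card (m := m) (n := K.dim) hflag
      (fun u _ => (K.iter_dimLE j') u.1 u.2) (r := i0.1) ?_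
    intro u hu
    have h1 : φ u = i0 := (Finset.mem_filter.mp (hsA hu)).2
    rw [hφdef] at h1
    exact congrArg Fin.val h1
  have hdimLf : Lf.dimLE (K.dim / m) := L.mapEquiv_dimLE eqW hdimL
  -- key facts about members of the fiber
  have key1 : ∀ x : ↥S,
      inducedMap (K.toRealized.iterBary (j'+1)).K φ (H.symm x.1) = p := by
    intro x
    obtain ⟨z, hz1, hz2⟩ := x.2
    have hz1' : inducedMap (K.toRealized.iterBary (j'+1)).K φ z = p := hz1
    have hHz : H z = x.1 := Subtype.ext hz2
    have hsz : H.symm x.1 = z := by rw [← hHz]; exact H.symm_apply_apply z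
    rw [hsz]
    exact hz1'
  have key2 : ∀ x : ↥S, (x.1 : V → ℝ) = Cj.bary.geomMap (H.symm x.1) := by
    intro x
    exact (congrArg Subtype.val (H.apply_symm_apply x.1)).symm
  -- the map to the small complex
  let g0 : ↥S → Cj.bary.VV → ℝ := fun x u =>
    if φ u = i0 then (H.symm x.1).1 u / p.1 i0 else 0
  have hg0eq : ∀ (x : ↥S) (u : Cj.bary.VV), g0 x u
      = if φ u = i0 then (H.symm x.1).1 u / p.1 i0 else 0 := fun x u => rfl
  have hg0sum : ∀ x : ↥S, ∑ u, g0 x u = 1 := by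
    intro x
    have h1 : ∑ u, g0 x u
        = ∑ u ∈ Finset.univ.filter (fun u => φ u = i0), (H.symm x.1).1 u / p.1 i0 :=
      (Finset.sum_filter _ _).symm
    rw [h1, ← Finset.sum_div]
    have h2 : ∑ u ∈ Finset.univ.filter (fun u => φ u = i0), (H.symm x.1).1 u = p.1 i0 :=
      congrFun (congrArg Subtype.val (key1 x)) i0
    rw [h2, div_self hp0.ne']
  have hg0supp : ∀ (x : ↥S) (u : Cj.bary.VV), g0 x u ≠ 0 → φ u = i0 ∧ (H.symm x.1).1 u ≠ 0 := by
    intro x u hne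
    rw [hg0eq] at hne
    by_cases hc : φ u = i0
    · rw [if_pos hc] at hne
      refine ⟨hc, fun h0 => hne ?_⟩
      rw [h0, zero_div]
    · rw [if_neg hc] at hne
      exact absurd rfl hne
  have hg0mem : ∀ x : ↥S, g0 x ∈ L.space := by
    intro x
    obtain ⟨hnn, hsum, c, hc, hsupp⟩ := (H.symm x.1).2
    refine ⟨fun u => ?_, hg0sum x, ?_⟩
    · rw [hg0eq]
      split
      · exact div_nonneg (hnn u) hp0.le
      · exact le_rfl
    · set Sx : Finset Cj.bary.VV :=
        (Finset.univ.filter fun u => (H.symm x.1).1 u ≠ 0).filter (fun u => φ u = i0)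
        with hSxdef
      have hsub_c : Sx ⊆ c := by
        intro u hu
        exact hsupp u (Finset.mem_filter.mp (Finset.mem_filter.mp hu).1).2
      have hSxne : Sx.Nonempty := by
        by_contra hem
        have hzero : ∑ u ∈ Finset.univ.filter (fun u => φ u = i0), (H.symm x.1).1 u = 0 := by
          refine Finset.sum_eq_zero fun u hu => ?_
          by_contra hne
          exact hem ⟨u, Finset.mem_filter.mpr
            ⟨Finset.mem_filter.mpr ⟨Finset.mem_univ u, hne⟩, (Finset.mem_filter.mp hu).2⟩⟩
        have h2 : ∑ u ∈ Finset.univ.filter (fun u => φ u = i0), (H.symm x.1).1 u = p.1 i0 :=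
          congrFun (congrArg Subtype.val (key1 x)) i0
        rw [h2] at hzero
        exact hi0 hzero
      have hSxfaces : Sx ∈ Cj.bary.K.faces := Cj.bary.K.down_closed c hc Sx hsub_c hSxne
      have hSxA : Sx ⊆ A := by
        intro u hu
        exact Finset.mem_filter.mpr ⟨Finset.mem_univ u, (Finset.mem_filter.mp hu).2⟩
      refine ⟨Sx, Finset.mem_filter.mpr ⟨hSxfaces, hSxA⟩, fun u hu => ?_⟩
      obtain ⟨hφu, hyu⟩ := hg0supp x u hu
      exact Finset.mem_filter.mpr ⟨Finset.mem_filter.mpr ⟨Finset.mem_univ u, hyu⟩, hφu⟩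
  let gf : ↥S → ↥Lf.space := fun x =>
    ⟨fun w => g0 x (eqW.symm w), FinSimpComplex.mapEquiv_space_mem eqW L (hg0mem x)⟩
  have hcontgf : Continuous gf := by
    refine Continuous.subtype_mk ?_ _
    refine continuous_pi fun w => ?_
    show Continuous fun x : ↥S =>
      if φ (eqW.symm w) = i0 then (H.symm x.1).1 (eqW.symm w) / p.1 i0 else 0
    by_cases hcond : φ (eqW.symm w) = i0
    · simp only [if_pos hcond]
      exact ((continuous_apply (eqW.symm w)).comp (continuous_subtype_val.comp
        (H.symm.continuous.comp continuous_subtype_val))).div_const _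
    · simp only [if_neg hcond]
      exact continuous_const
  have hfib : ∀ q : ↥Lf.space,
      diamOn (fun a b : ↥S => d a.1 b.1) (gf ⁻¹' {q}) < ENNReal.ofReal ε := by
    intro q
    have hmain : ∀ x1 x2 : ↥S, gf x1 = q → gf x2 = q → d x1.1 x2.1 < ε/2 := by
      intro x1 x2 h1 h2
      obtain ⟨w0, hw0⟩ : ∃ w, q.1 w ≠ 0 := by
        by_contra h
        push_neg at h
        have h0 : ∑ w, q.1 w = 0 := Finset.sum_eq_zero fun w _ => h w
        rw [q.2.2.1] at h0
        exact one_ne_zero h0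
      have hval1 : g0 x1 (eqW.symm w0) ≠ 0 := by
        have e1 : g0 x1 (eqW.symm w0) = q.1 w0 := congrFun (congrArg Subtype.val h1) w0
        rw [e1]
        exact hw0
      have hval2 : g0 x2 (eqW.symm w0) ≠ 0 := by
        have e2 : g0 x2 (eqW.symm w0) = q.1 w0 := congrFun (congrArg Subtype.val h2) w0
        rw [e2]
        exact hw0
      obtain ⟨-, hy1⟩ := hg0supp x1 _ hval1
      obtain ⟨-, hy2⟩ := hg0supp x2 _ hval2
      obtain ⟨v0, hv0⟩ := Cj.bary_vert_nonempty (eqW.symm w0)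
      have hd1 : ‖(x1.1 : V → ℝ) - Cj.pos v0‖ ≤ M := by
        rw [key2 x1]
        exact Cj.geomMap_close hmesh (H.symm x1.1) hy1 hv0
      have hd2 : ‖(x2.1 : V → ℝ) - Cj.pos v0‖ ≤ M := by
        rw [key2 x2]
        exact Cj.geomMap_close hmesh (H.symm x2.1) hy2 hv0
      have hdist : dist (x1.1 : V → ℝ) (x2.1 : V → ℝ) < δ := by
        rw [dist_eq_norm]
        have htri : ‖(x1.1 : V → ℝ) - (x2.1 : V → ℝ)‖
            ≤ ‖(x1.1 : V → ℝ) - Cj.pos v0‖ + ‖(x2.1 : V → ℝ) - Cj.pos v0‖ := by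
          have hh : (x1.1 : V → ℝ) - (x2.1 : V → ℝ)
              = ((x1.1 : V → ℝ) - Cj.pos v0) - ((x2.1 : V → ℝ) - Cj.pos v0) := by ring
          rw [hh]
          exact norm_sub_le _ _
        linarith
      exact hδd x1.1 x2.1 hdist
    have hle : diamOn (fun a b : ↥S => d a.1 b.1) (gf ⁻¹' {q})
        ≤ ENNReal.ofReal (ε/2) := by
      unfold diamOn
      refine iSup₂_le fun x1 hx1 => iSup₂_le fun x2 hx2 => ?_
      exact ENNReal.ofReal_le_ofReal (hmain x1 x2 hx1 hx2).le
    refine lt_of_le_of_lt hle ?_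
    rw [ENNReal.ofReal_lt_ofReal_iff hε]
    linarith
  refine le_trans
    (widim_le_of_embedding (fun a b : ↥S => d a.1 b.1) ε (K.dim / m) kk Lf hdimLf
      gf hcontgf hfib) ?_
  have hmne : (m : ℝ≥0∞) ≠ 0 := by
    exact_mod_cast hm.ne'
  rw [ENNReal.le_div_iff_mul_le (Or.inl hmne) (Or.inl (ENNReal.natCast_ne_top m))]
  rw [← Nat.cast_mul]
  exact_mod_cast Nat.div_mul_le_self K.dim m
end
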